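/- arXiv:2203.10720 — 17 statements merged into one kernel-verified Lean document; each statement's English description precedes it below -/
import Mathlib

section
/- Let H be a real Hilbert space, let α ∈ (0,1], and let T : H → H be an α-averaged operator whose fixed point set is nonempty. Let x, e ∈ H, let λ ∈ ℝ, let η ≥ 0, and define y := (1−λ)x + λ(T x) and z := y + η•e. Let ε ≥ 0 and β ≥ 0 satisfy η·ε < 1, and let x̄ ∈ H. If ‖e‖ ≤ ε·‖x − z‖ and ‖y − x̄‖ ≤ β·‖x − x̄‖, then ‖z − x̄‖ ≤ ((β + η·ε)/(1 − η·ε))·‖x − x̄‖. -/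
open Metric

/-- If `T` is an `α`-averaged operator on a real Hilbert space with a fixed
point, `y := (1-λ)x + λ(Tx)`, `z := y + η•e`, `η·ε < 1`, `‖e‖ ≤ ε‖x - z‖`, and
`‖y - x̄‖ ≤ β‖x - x̄‖`, then `‖z - x̄‖ ≤ ((β + η·ε)/(1 - η·ε))‖x - x̄‖`. -/
theorem stmt_0 {H : Type*} [NormedAddCommGroup H] [InnerProductSpace ℝ H] [CompleteSpace H]
    (α : ℝ) (hα : α ∈ Set.Ioc (0 : ℝ) 1) (T : H → H)
    (hT : ∃ R : H → H, (∀ a b : H, ‖R a - R b‖ ≤ ‖a - b‖) ∧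
      ∀ a : H, T a = (1 - α) • a + α • R a)
    (hFix : ∃ w : H, T w = w)
    (x e : H) (lam η : ℝ) (hη : 0 ≤ η)
    (y z : H)
    (hy : y = (1 - lam) • x + lam • T x)
    (hz : z = y + η • e)
    (ε β : ℝ) (hε : 0 ≤ ε) (hβ : 0 ≤ β) (hηε : η * ε < 1)
    (xbar : H)
    (he : ‖e‖ ≤ ε * ‖x - z‖)
    (hyx : ‖y - xbar‖ ≤ β * ‖x - xbar‖) :
    ‖z - xbar‖ ≤ ((β + η * ε) / (1 - η * ε)) * ‖x - xbar‖ := by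
  have h1 : ‖z - xbar‖ ≤ ‖y - xbar‖ + η * ‖e‖ := by
    calc ‖z - xbar‖ = ‖(y - xbar) + η • e‖ := by rw [hz, add_sub_right_comm]
      _ ≤ ‖y - xbar‖ + ‖η • e‖ := norm_add_le _ _
      _ = ‖y - xbar‖ + η * ‖e‖ := by rw [norm_smul, Real.norm_of_nonneg hη]
  have h2 : ‖x - z‖ ≤ ‖x - xbar‖ + ‖z - xbar‖ := by
    have := dist_triangle x xbar z
    simpa [dist_eq_norm, norm_sub_rev xbar z] using this
  rw [div_mul_eq_mul_div, le_div_iff₀ (by linarith)]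
  nlinarith [norm_nonneg e, norm_nonneg (x - z), norm_nonneg (z - xbar),
    mul_le_mul_of_nonneg_left he hη,
    mul_le_mul_of_nonneg_left h2 (mul_nonneg hη hε)]
end

section
/- Let H be a real Hilbert space, let u, v ∈ H, and let t > 0 satisfy ‖v‖ ≤ t·‖u − v‖. Then for every λ ∈ [0,1], ‖(1−λ)u + λv‖² ≤ (1 − λ/(t+1))²·‖u‖² + λ·(t² + λ − 1)·‖(√t/(1+t))·u − (1/√t)·v‖². -/
/-!
Put `a = ‖u‖²`, `b = ⟪u, v⟫`, `c = ‖v‖²`. Both sides are quadratic in `(a, b, c)`, and the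
right side minus the left side equals `λ(t + 1 - λ) / (t(t + 1)) · (t²‖u - v‖² - ‖v‖²)`: a
nonnegative factor for `λ ∈ [0, 1]` times the squared hypothesis.
-/

open RealInnerProductSpace

section

variable {H : Type*} [NormedAddCommGroup H] [InnerProductSpace ℝ H]

theorem norm_smul_add_smul_sq_real (a b : ℝ) (x y : H) :
    ‖a • x + b • y‖ ^ 2 = a ^ 2 * ‖x‖ ^ 2 + 2 * (a * b) * ⟪x, y⟫ + b ^ 2 * ‖y‖ ^ 2 := by
  rw [norm_add_sq_real, norm_smul, norm_smul, real_inner_smul_left, real_inner_smul_right,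
    mul_pow, mul_pow, Real.norm_eq_abs, Real.norm_eq_abs, sq_abs, sq_abs]
  ring

theorem bound_sub_norm_sq_convexCombination (u v : H) {t : ℝ} (ht : 0 < t) (lam : ℝ) :
    (1 - lam / (t + 1)) ^ 2 * ‖u‖ ^ 2 +
        lam * (t ^ 2 + lam - 1) * ‖(Real.sqrt t / (1 + t)) • u - (1 / Real.sqrt t) • v‖ ^ 2 -
        ‖(1 - lam) • u + lam • v‖ ^ 2 =
      lam * (t + 1 - lam) / (t * (t + 1)) * ((t * ‖u - v‖) ^ 2 - ‖v‖ ^ 2) := by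
  have hsq : Real.sqrt t ^ 2 = t := Real.sq_sqrt ht.le
  have hpos : 0 < Real.sqrt t := Real.sqrt_pos.mpr ht
  rw [sub_eq_add_neg _ ((1 / Real.sqrt t) • v), ← neg_smul, norm_smul_add_smul_sq_real,
    norm_smul_add_smul_sq_real, mul_pow, norm_sub_sq_real]
  -- with `t = s²` the identity is one of rational functions in `s`
  generalize Real.sqrt t = s at hsq hpos ⊢
  subst hsq
  field_simp
  ring

end

theorem stmt_1_general {H : Type*} [NormedAddCommGroup H] [InnerProductSpace ℝ H]
    (u v : H) (t : ℝ) (ht : 0 < t) (h : ‖v‖ ≤ t * ‖u - v‖)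
    (lam : ℝ) (hlam : lam ∈ Set.Icc (0 : ℝ) 1) :
    ‖(1 - lam) • u + lam • v‖ ^ 2 ≤
      (1 - lam / (t + 1)) ^ 2 * ‖u‖ ^ 2 +
        lam * (t ^ 2 + lam - 1) *
          ‖(Real.sqrt t / (1 + t)) • u - (1 / Real.sqrt t) • v‖ ^ 2 := by
  obtain ⟨hlam0, hlam1⟩ := hlam
  have hcoef : 0 ≤ lam * (t + 1 - lam) / (t * (t + 1)) := by
    have : 0 ≤ t + 1 - lam := by linarith
    positivity
  have hgap : 0 ≤ (t * ‖u - v‖) ^ 2 - ‖v‖ ^ 2 :=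
    sub_nonneg.mpr (pow_le_pow_left₀ (norm_nonneg v) h 2)
  rw [← sub_nonneg, bound_sub_norm_sq_convexCombination u v ht lam]
  exact mul_nonneg hcoef hgap

/-- In a real Hilbert space, if `‖v‖ ≤ t‖u - v‖` with `t > 0`, then for every
`λ ∈ [0,1]`,
`‖(1-λ)u + λv‖² ≤ (1 - λ/(t+1))²‖u‖² + λ(t² + λ - 1)‖(√t/(1+t))u - (1/√t)v‖²`. -/
theorem stmt_1 {H : Type*} [NormedAddCommGroup H] [InnerProductSpace ℝ H] [CompleteSpace H]
    (u v : H) (t : ℝ) (ht : 0 < t) (h : ‖v‖ ≤ t * ‖u - v‖)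
    (lam : ℝ) (hlam : lam ∈ Set.Icc (0 : ℝ) 1) :
    ‖(1 - lam) • u + lam • v‖ ^ 2 ≤
      (1 - lam / (t + 1)) ^ 2 * ‖u‖ ^ 2 +
        lam * (t ^ 2 + lam - 1) *
          ‖(Real.sqrt t / (1 + t)) • u - (1 / Real.sqrt t) • v‖ ^ 2 :=
  stmt_1_general u v t ht h lam hlam
end

section
/- Let H be a real Hilbert space, let u, v ∈ H, and let t > 0 satisfy ‖v‖ ≤ t·‖u − v‖. If λ is a real number with 0 ≤ λ ≤ 1 − t², then ‖(1−λ)u + λv‖² ≤ (1 − λ/(t+1))²·‖u‖² and (1 − λ/(t+1))²·‖u‖² ≤ ‖u‖². -/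
/-!
Expanding `(1 - λ)u + λv = u - λ(u - v)` and using `‖v‖² ≤ t²‖u - v‖²` to bound `⟪u, u - v⟫` from
below gives `‖(1 - λ)u + λv‖² ≤ (1 - λ)‖u‖² - λ(1 - t² - λ)‖u - v‖²`. Since `1 - t² - λ ≥ 0` and
`‖u‖ ≤ (t + 1)‖u - v‖` by the triangle inequality, `‖u - v‖²` may be replaced by `‖u‖²/(t + 1)²`,
and the resulting coefficient of `‖u‖²` is exactly `(1 - λ/(t + 1))²`.
-/

open scoped RealInnerProductSpace

theorem norm_le_add_one_mul_norm_sub {E : Type*} [SeminormedAddCommGroup E] {u v : E} {t : ℝ}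
    (h : ‖v‖ ≤ t * ‖u - v‖) : ‖u‖ ≤ (t + 1) * ‖u - v‖ :=
  calc ‖u‖ = ‖(u - v) + v‖ := by rw [sub_add_cancel]
    _ ≤ ‖u - v‖ + ‖v‖ := norm_add_le _ _
    _ ≤ (t + 1) * ‖u - v‖ := by linarith

section InnerProductSpace

variable {E : Type*} [NormedAddCommGroup E] [InnerProductSpace ℝ E] {u v : E} {t : ℝ}

theorem norm_sq_add_mul_norm_sub_sq_le_two_inner (h : ‖v‖ ≤ t * ‖u - v‖) :
    ‖u‖ ^ 2 + (1 - t ^ 2) * ‖u - v‖ ^ 2 ≤ 2 * ⟪u, u - v⟫ := by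
  have hv : ‖v‖ ^ 2 ≤ (t * ‖u - v‖) ^ 2 := pow_le_pow_left₀ (norm_nonneg v) h 2
  have hexpand : ‖v‖ ^ 2 = ‖u‖ ^ 2 - 2 * ⟪u, u - v⟫ + ‖u - v‖ ^ 2 := by
    rw [← norm_sub_sq_real, sub_sub_cancel]
  nlinarith

theorem norm_smul_add_smul_sq_le (h : ‖v‖ ≤ t * ‖u - v‖) {lam : ℝ} (hlam : 0 ≤ lam) :
    ‖(1 - lam) • u + lam • v‖ ^ 2 ≤ (1 - lam) * ‖u‖ ^ 2 - lam * (1 - t ^ 2 - lam) * ‖u - v‖ ^ 2 := by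
  have hcomb : (1 - lam) • u + lam • v = u - lam • (u - v) := by
    rw [smul_sub, sub_smul, one_smul]; abel
  have hexpand : ‖u - lam • (u - v)‖ ^ 2
      = ‖u‖ ^ 2 - 2 * lam * ⟪u, u - v⟫ + lam ^ 2 * ‖u - v‖ ^ 2 := by
    rw [norm_sub_sq_real, real_inner_smul_right, norm_smul, Real.norm_of_nonneg hlam]
    ring
  rw [hcomb, hexpand]
  nlinarith [mul_le_mul_of_nonneg_left (norm_sq_add_mul_norm_sub_sq_le_two_inner h) hlam]

end InnerProductSpace

theorem one_sub_div_add_one_sq_mul_sq {a t lam : ℝ} (ht : t + 1 ≠ 0) :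
    (1 - lam / (t + 1)) ^ 2 * a ^ 2
      = (1 - lam) * a ^ 2 - lam * (1 - t ^ 2 - lam) * (a / (t + 1)) ^ 2 := by
  field_simp
  ring

theorem one_sub_div_add_one_sq_le_one {t lam : ℝ} (ht : 0 < t + 1) (hlam0 : 0 ≤ lam)
    (hlam1 : lam ≤ 1 - t ^ 2) : (1 - lam / (t + 1)) ^ 2 ≤ 1 := by
  have hlo : 0 ≤ lam / (t + 1) := div_nonneg hlam0 ht.le
  have hhi : lam / (t + 1) ≤ 1 - t := by
    rw [div_le_iff₀ ht]; nlinarith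
  nlinarith

theorem stmt_2_general {H : Type*} [NormedAddCommGroup H] [InnerProductSpace ℝ H]
    (u v : H) (t : ℝ) (ht : 0 < t) (h : ‖v‖ ≤ t * ‖u - v‖)
    (lam : ℝ) (hlam0 : 0 ≤ lam) (hlam1 : lam ≤ 1 - t ^ 2) :
    ‖(1 - lam) • u + lam • v‖ ^ 2 ≤ (1 - lam / (t + 1)) ^ 2 * ‖u‖ ^ 2 ∧
      (1 - lam / (t + 1)) ^ 2 * ‖u‖ ^ 2 ≤ ‖u‖ ^ 2 := by
  have ht1 : 0 < t + 1 := by linarith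
  have hdist : (‖u‖ / (t + 1)) ^ 2 ≤ ‖u - v‖ ^ 2 := by
    gcongr
    rw [div_le_iff₀' ht1]
    exact norm_le_add_one_mul_norm_sub h
  refine ⟨?_, ?_⟩
  · calc ‖(1 - lam) • u + lam • v‖ ^ 2
        ≤ (1 - lam) * ‖u‖ ^ 2 - lam * (1 - t ^ 2 - lam) * ‖u - v‖ ^ 2 :=
          norm_smul_add_smul_sq_le h hlam0
      _ ≤ (1 - lam) * ‖u‖ ^ 2 - lam * (1 - t ^ 2 - lam) * (‖u‖ / (t + 1)) ^ 2 := by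
          gcongr
      _ = (1 - lam / (t + 1)) ^ 2 * ‖u‖ ^ 2 := (one_sub_div_add_one_sq_mul_sq ht1.ne').symm
  · exact mul_le_of_le_one_left (sq_nonneg _) (one_sub_div_add_one_sq_le_one ht1 hlam0 hlam1)

/-- In a real Hilbert space, if `‖v‖ ≤ t‖u - v‖` with `t > 0` and
`0 ≤ λ ≤ 1 - t²`, then `‖(1-λ)u + λv‖² ≤ (1 - λ/(t+1))²‖u‖²` and
`(1 - λ/(t+1))²‖u‖² ≤ ‖u‖²`. -/
theorem stmt_2 {H : Type*} [NormedAddCommGroup H] [InnerProductSpace ℝ H] [CompleteSpace H]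
    (u v : H) (t : ℝ) (ht : 0 < t) (h : ‖v‖ ≤ t * ‖u - v‖)
    (lam : ℝ) (hlam0 : 0 ≤ lam) (hlam1 : lam ≤ 1 - t ^ 2) :
    ‖(1 - lam) • u + lam • v‖ ^ 2 ≤ (1 - lam / (t + 1)) ^ 2 * ‖u‖ ^ 2 ∧
      (1 - lam / (t + 1)) ^ 2 * ‖u‖ ^ 2 ≤ ‖u‖ ^ 2 :=
  stmt_2_general u v t ht h lam hlam0 hlam1
end

section
/- Let (ε_k)_{k∈ℕ} be a sequence of nonnegative reals and let (ρ_k)_{k∈ℕ} be a sequence in [0,1]. For each k ∈ ℕ define χ_k := ∏_{i=0}^{k} ρ_i and ξ_k := ∑_{i=0}^{k} (∏_{j=i+1}^{k} ρ_j)·ε_i (with the empty product ∏_{j=k+1}^{k} ρ_j := 1). Suppose that ∑_{k∈ℕ} ε_k < ∞, that limsup_{k→∞} (χ_k)^{1/k} < 1, and that (ρ_k) is nonincreasing, i.e., ρ_{k+1} ≤ ρ_k for all k. Then ∑_{k∈ℕ} ξ_k < ∞. -/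
open Filter Finset

/-- Let `(ε_k)` be nonnegative reals and `(ρ_k)` be in `[0,1]`, and set
`χ_k := ∏_{i=0}^{k} ρ_i` and `ξ_k := ∑_{i=0}^{k} (∏_{j=i+1}^{k} ρ_j)·ε_i`.
If `∑ ε_k < ∞`, `limsup (χ_k)^{1/k} < 1`, and `(ρ_k)` is nonincreasing, then
`∑ ξ_k < ∞`. -/
theorem stmt_4 (ε ρ : ℕ → ℝ) (hε : ∀ k, 0 ≤ ε k) (hρ : ∀ k, ρ k ∈ Set.Icc (0 : ℝ) 1)
    (χ : ℕ → ℝ) (hχ : ∀ k, χ k = ∏ i ∈ Finset.range (k + 1), ρ i)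
    (ξ : ℕ → ℝ)
    (hξ : ∀ k, ξ k =
      ∑ i ∈ Finset.range (k + 1), (∏ j ∈ Finset.Ico (i + 1) (k + 1), ρ j) * ε i)
    (hsum : Summable ε)
    (hlim : Filter.limsup (fun k : ℕ => (χ k) ^ (1 / (k : ℝ))) Filter.atTop < 1)
    (hdec : ∀ k, ρ (k + 1) ≤ ρ k) :
    Summable ξ := by
  have hρ0 : ∀ k, 0 ≤ ρ k := fun k => (hρ k).1
  have hρ1 : ∀ k, ρ k ≤ 1 := fun k => (hρ k).2
  have hanti : Antitone ρ := antitone_nat_of_succ_le hdec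
  have hbdd : BddBelow (Set.range ρ) := ⟨0, by rintro x ⟨k, rfl⟩; exact hρ0 k⟩
  obtain ⟨L, htend, hL0, hLle⟩ : ∃ L : ℝ, Tendsto ρ atTop (nhds L) ∧ 0 ≤ L ∧ ∀ k, L ≤ ρ k :=
    ⟨⨅ k, ρ k, tendsto_atTop_ciInf hanti hbdd, le_ciInf hρ0, fun k => ciInf_le hbdd k⟩
  have hχ0 : ∀ k, 0 ≤ χ k := by
    intro k; rw [hχ]; exact Finset.prod_nonneg fun i _ => hρ0 i
  have hχ1 : ∀ k, χ k ≤ 1 := by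
    intro k; rw [hχ]; exact Finset.prod_le_one (fun i _ => hρ0 i) (fun i _ => hρ1 i)
  have hL1 : L < 1 := by
    rcases eq_or_lt_of_le hL0 with h0 | h0
    · linarith
    · have hLle1 : L ≤ 1 := (hLle 0).trans (hρ1 0)
      have key : L ^ (2:ℝ) ≤ Filter.limsup (fun k : ℕ => (χ k) ^ (1 / (k : ℝ))) atTop := by
        apply Filter.le_limsup_of_frequently_le
        · apply Filter.Eventually.frequently
          filter_upwards [eventually_ge_atTop 1] with k hk
          have h1 : L ^ (k+1) ≤ χ k := by
            rw [hχ]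
            calc L ^ (k+1) = ∏ _i ∈ Finset.range (k+1), L := by
                  rw [Finset.prod_const, Finset.card_range]
              _ ≤ ∏ i ∈ Finset.range (k+1), ρ i :=
                  Finset.prod_le_prod (fun _ _ => hL0) (fun i _ => hLle i)
          have h2 : (L ^ (k+1)) ^ (1/(k:ℝ)) ≤ (χ k) ^ (1/(k:ℝ)) :=
            Real.rpow_le_rpow (by positivity) h1 (by positivity)
          refine le_trans ?_ h2
          rw [← Real.rpow_natCast L (k+1), ← Real.rpow_mul hL0]
          apply Real.rpow_le_rpow_of_exponent_ge h0 hLle1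
          have hk' : (1:ℝ) ≤ (k:ℝ) := by exact_mod_cast hk
          rw [mul_one_div]
          rw [div_le_iff₀ (by linarith)]
          push_cast
          linarith
        · refine isBoundedUnder_of ⟨1, fun k => ?_⟩
          exact Real.rpow_le_one (hχ0 k) (hχ1 k) (by positivity)
      have hlt : L ^ (2:ℝ) < 1 := lt_of_le_of_lt key hlim
      have h2 : L ^ (2:ℝ) = L * L := by
        rw [show (2:ℝ) = ((2:ℕ):ℝ) by norm_num, Real.rpow_natCast]; ring
      rw [h2] at hlt
      by_contra hc
      push_neg at hc
      have := mul_le_mul hc hc (by linarith) (by linarith)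
      linarith only [hlt, this]
  obtain ⟨r, hr0, hr1, hLr⟩ : ∃ r : ℝ, 0 < r ∧ r < 1 ∧ L < r :=
    ⟨(1 + L) / 2, by positivity, by linarith, by linarith⟩
  obtain ⟨N, hN⟩ : ∃ N, ∀ j ≥ N, ρ j ≤ r := by
    have := htend.eventually_lt_const hLr
    rw [eventually_atTop] at this
    obtain ⟨N, hN⟩ := this
    exact ⟨N, fun j hj => (hN j hj).le⟩
  -- key product bound
  have key2 : ∀ k, ∀ i ∈ Finset.range (k+1),
      (∏ j ∈ Finset.Ico (i+1) (k+1), ρ j) ≤ r^(k-i) / r^N := by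
    intro k i hi
    have hik : i ≤ k := Nat.lt_succ_iff.mp (Finset.mem_range.mp hi)
    set m := min (max (i+1) (N+1)) (k+1) with hmdef
    have h1 : ∏ j ∈ Finset.Ico (i+1) (k+1), ρ j ≤ ∏ j ∈ Finset.Ico m (k+1), ρ j := by
      have hsplit : (∏ j ∈ Finset.Ico (i+1) m, ρ j) * ∏ j ∈ Finset.Ico m (k+1), ρ j
          = ∏ j ∈ Finset.Ico (i+1) (k+1), ρ j :=
        Finset.prod_Ico_consecutive ρ (by omega) (by omega)
      rw [← hsplit]
      exact mul_le_of_le_one_left (Finset.prod_nonneg fun j _ => hρ0 j)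
        (Finset.prod_le_one (fun j _ => hρ0 j) (fun j _ => hρ1 j))
    have h2 : ∏ j ∈ Finset.Ico m (k+1), ρ j ≤ r ^ ((k+1) - m) := by
      calc ∏ j ∈ Finset.Ico m (k+1), ρ j ≤ ∏ _j ∈ Finset.Ico m (k+1), r :=
            Finset.prod_le_prod (fun j _ => hρ0 j)
              (fun j hj => hN j (by
                have h1 := (Finset.mem_Ico.mp hj).1
                have h2 := (Finset.mem_Ico.mp hj).2
                omega))
        _ = r ^ ((k+1) - m) := by rw [Finset.prod_const, Nat.card_Ico]
    have h3 : r ^ ((k+1) - m) ≤ r^(k-i) / r^N := by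
      rw [le_div_iff₀ (by positivity), ← pow_add]
      exact pow_le_pow_of_le_one hr0.le hr1.le (by omega)
    linarith
  have hξ0 : ∀ k, 0 ≤ ξ k := by
    intro k; rw [hξ]
    exact Finset.sum_nonneg fun i _ =>
      mul_nonneg (Finset.prod_nonneg fun j _ => hρ0 j) (hε i)
  have hbound : ∀ k, ξ k ≤ (r^N)⁻¹ * ‖∑ i ∈ Finset.range (k+1), ε i * r^(k-i)‖ := by
    intro k
    have h1 : ξ k ≤ ∑ i ∈ Finset.range (k+1), (r^(k-i)/r^N) * ε i := by
      rw [hξ]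
      exact Finset.sum_le_sum fun i hi =>
        mul_le_mul_of_nonneg_right (key2 k i hi) (hε i)
    have h2 : ∑ i ∈ Finset.range (k+1), (r^(k-i)/r^N) * ε i
        = (r^N)⁻¹ * ∑ i ∈ Finset.range (k+1), ε i * r^(k-i) := by
      rw [Finset.mul_sum]; exact Finset.sum_congr rfl fun i _ => by ring
    have h3 : ∑ i ∈ Finset.range (k+1), ε i * r^(k-i)
        ≤ ‖∑ i ∈ Finset.range (k+1), ε i * r^(k-i)‖ := by
      rw [Real.norm_eq_abs]; exact le_abs_self _
    calc ξ k ≤ (r^N)⁻¹ * ∑ i ∈ Finset.range (k+1), ε i * r^(k-i) := by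
          rw [← h2]; exact h1
      _ ≤ (r^N)⁻¹ * ‖∑ i ∈ Finset.range (k+1), ε i * r^(k-i)‖ :=
          mul_le_mul_of_nonneg_left h3 (by positivity)
  have hsummable : Summable
      (fun k => (r^N)⁻¹ * ‖∑ i ∈ Finset.range (k+1), ε i * r^(k-i)‖) := by
    apply Summable.mul_left
    apply summable_norm_sum_mul_range_of_summable_norm
    · simpa [Real.norm_eq_abs, abs_of_nonneg (hε _)] using hsum
    · simpa [Real.norm_eq_abs, abs_of_nonneg (pow_nonneg hr0.le _)] using
        summable_geometric_of_lt_one hr0.le hr1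
  exact Summable.of_nonneg_of_le hξ0 hbound hsummable
end

section
/- Let f : ℝ → ℝ be continuous and nondecreasing, and suppose {x ∈ ℝ : f(x) = 0} = {x̄} for some x̄ ∈ ℝ. Then the following two conditions are equivalent: (a) f is metrically subregular at x̄ for 0, i.e., there exist κ > 0 and δ > 0 such that for all x with |x − x̄| ≤ δ one has |x − x̄| ≤ κ·|f(x)|; (b) f⁻¹ is Lipschitz continuous at 0 with a positive modulus, i.e., there exist α > 0 and τ > 0 such that for all x with |f(x)| ≤ τ one has |x − x̄| ≤ α·|f(x)|. -/
/-- Let `f : ℝ → ℝ` be continuous and nondecreasing with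
`{x : f x = 0} = {x̄}`.  Then `f` is metrically subregular at `x̄` for `0` if and only if
`f⁻¹` is Lipschitz continuous at `0` with a positive modulus. -/
theorem stmt_7 (f : ℝ → ℝ) (hf : Continuous f) (hmono : Monotone f)
    (xbar : ℝ) (hzero : {x : ℝ | f x = 0} = {xbar}) :
    (∃ κ > (0 : ℝ), ∃ δ > (0 : ℝ), ∀ x : ℝ, |x - xbar| ≤ δ → |x - xbar| ≤ κ * |f x|) ↔
      (∃ α > (0 : ℝ), ∃ τ > (0 : ℝ), ∀ x : ℝ, |f x| ≤ τ → |x - xbar| ≤ α * |f x|) := by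
  have hxb : f xbar = 0 := by
    have h : xbar ∈ ({xbar} : Set ℝ) := rfl
    rw [← hzero] at h; exact h
  constructor
  · rintro ⟨κ, hκ, δ, hδ, h⟩
    have ha : 0 < f (xbar + δ) := by
      have hne : f (xbar + δ) ≠ 0 := by
        intro h0
        have : xbar + δ ∈ {x : ℝ | f x = 0} := h0
        rw [hzero] at this
        have : xbar + δ = xbar := this
        linarith
      have hle := hmono (le_add_of_nonneg_right hδ.le : xbar ≤ xbar + δ)
      rw [hxb] at hle
      exact lt_of_le_of_ne hle (Ne.symm hne)
    have hb : f (xbar - δ) < 0 := by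
      have hne : f (xbar - δ) ≠ 0 := by
        intro h0
        have : xbar - δ ∈ {x : ℝ | f x = 0} := h0
        rw [hzero] at this
        have : xbar - δ = xbar := this
        linarith
      have hle := hmono (by linarith : xbar - δ ≤ xbar)
      rw [hxb] at hle
      exact lt_of_le_of_ne hle hne
    refine ⟨κ, hκ, min (f (xbar + δ)) (-(f (xbar - δ))) / 2, by have := lt_min ha (neg_pos.mpr hb); linarith, ?_⟩
    intro x hx
    apply h
    have h1 := min_le_left (f (xbar + δ)) (-(f (xbar - δ)))
    have h2 := min_le_right (f (xbar + δ)) (-(f (xbar - δ)))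
    have hfx := le_abs_self (f x)
    have hfx' := neg_abs_le (f x)
    rw [abs_le]
    constructor
    · by_contra hgt
      push_neg at hgt
      have := hmono (by linarith : x ≤ xbar - δ)
      linarith
    · by_contra hgt
      push_neg at hgt
      have := hmono (by linarith : xbar + δ ≤ x)
      linarith
  · rintro ⟨α, hα, τ, hτ, h⟩
    have hc := Metric.continuous_iff.mp hf xbar τ hτ
    obtain ⟨δ, hδ, hd⟩ := hc
    refine ⟨α, hα, δ / 2, by linarith, ?_⟩
    intro x hx
    apply h
    have : dist x xbar < δ := by
      rw [Real.dist_eq]; linarith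
    have := hd x this
    rw [Real.dist_eq, hxb, sub_zero] at this
    linarith
end

section
/- Let H be a real Hilbert space, let A : H → Set H be monotone with Z := {z ∈ H : 0 ∈ A z} nonempty, let γ > 0, and let J : H → H satisfy (1/γ)·(w − J w) ∈ A(J w) for every w ∈ H (so J is the resolvent of γA). Let λ ∈ (0,2), let x ∈ H, let x̄ ∈ Z, and assume the metric subregularity condition: there exist κ > 0 and δ > 0 such that for every w ∈ H with ‖w − x̄‖ ≤ δ and every u ∈ A w, infDist(w, Z) ≤ κ·‖u‖. Set ρ := (1 − λ(2−λ)/(1 + κ/γ)²)^{1/2} and y := (1−λ)x + λ·(J x). If ‖J x − x̄‖ ≤ δ, then ρ ∈ (0,1) and, for every p ∈ Z with ‖x − p‖ = infDist(x, Z), one has ‖y − p‖ ≤ ρ·‖x − p‖. -/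
open scoped RealInnerProductSpace

/-- Let `A` be monotone on a real Hilbert space with `Z := zer A` nonempty,
`γ > 0`, and `J` the resolvent of `γA`.  Let `λ ∈ (0,2)`, `x̄ ∈ Z`, and assume metric
subregularity with constants `κ > 0`, `δ > 0`.  Set
`ρ := √(1 - λ(2-λ)/(1 + κ/γ)²)` and `y := (1-λ)x + λ(Jx)`.  If `‖Jx - x̄‖ ≤ δ`, then
`ρ ∈ (0,1)` and `‖y - p‖ ≤ ρ‖x - p‖` for every nearest point `p` of `x` in `Z`. -/
theorem stmt_8 {H : Type*} [NormedAddCommGroup H] [InnerProductSpace ℝ H] [CompleteSpace H]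
    (A : H → Set H)
    (hmono : ∀ x y u v : H, u ∈ A x → v ∈ A y → 0 ≤ ⟪x - y, u - v⟫)
    (Z : Set H) (hZ : Z = {z : H | (0 : H) ∈ A z}) (hZne : Z.Nonempty)
    (γ : ℝ) (hγ : 0 < γ)
    (J : H → H) (hJ : ∀ w : H, (1 / γ) • (w - J w) ∈ A (J w))
    (lam : ℝ) (hlam : lam ∈ Set.Ioo (0 : ℝ) 2)
    (x xbar : H) (hxbar : xbar ∈ Z)
    (κ δ : ℝ) (hκ : 0 < κ) (hδ : 0 < δ)
    (hsub : ∀ w : H, ‖w - xbar‖ ≤ δ → ∀ u ∈ A w, Metric.infDist w Z ≤ κ * ‖u‖)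
    (ρ : ℝ) (hρ : ρ = Real.sqrt (1 - lam * (2 - lam) / (1 + κ / γ) ^ 2))
    (y : H) (hy : y = (1 - lam) • x + lam • J x)
    (hJx : ‖J x - xbar‖ ≤ δ) :
    ρ ∈ Set.Ioo (0 : ℝ) 1 ∧
      ∀ p ∈ Z, ‖x - p‖ = Metric.infDist x Z → ‖y - p‖ ≤ ρ * ‖x - p‖ := by
  obtain ⟨hl0, hl2⟩ := hlam
  have hκγ : 0 < κ / γ := div_pos hκ hγ
  have hden : (1:ℝ) < (1 + κ / γ) ^ 2 := by nlinarith
  have hc0 : 0 < lam * (2 - lam) / (1 + κ / γ) ^ 2 :=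
    div_pos (by nlinarith) (by positivity)
  have hc1 : lam * (2 - lam) / (1 + κ / γ) ^ 2 < 1 := by
    rw [div_lt_one (by positivity)]
    nlinarith [sq_nonneg (lam - 1)]
  have hinner0 : (0:ℝ) ≤ 1 - lam * (2 - lam) / (1 + κ / γ) ^ 2 := by linarith
  have hρ2 : ρ ^ 2 = 1 - lam * (2 - lam) / (1 + κ / γ) ^ 2 := by
    rw [hρ, Real.sq_sqrt hinner0]
  have hρmem : ρ ∈ Set.Ioo (0:ℝ) 1 := by
    constructor
    · rw [hρ]; exact Real.sqrt_pos.mpr (by linarith)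
    · rw [hρ]
      have h1 : Real.sqrt (1 - lam * (2 - lam) / (1 + κ / γ) ^ 2) < Real.sqrt 1 :=
        Real.sqrt_lt_sqrt hinner0 (by linarith)
      simpa using h1
  refine ⟨hρmem, ?_⟩
  intro p hp hnp
  have h0p : (0:H) ∈ A p := by rw [hZ] at hp; exact hp
  -- monotonicity: ⟪Jx - p, x - Jx⟫ ≥ 0
  have hmon := hmono (J x) p ((1/γ) • (x - J x)) 0 (hJ x) h0p
  rw [sub_zero, real_inner_smul_right] at hmon
  have hip : (0:ℝ) ≤ ⟪J x - p, x - J x⟫ := by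
    nlinarith [one_div_pos.mpr hγ]
  -- subregularity bound
  have hsr := hsub (J x) hJx ((1/γ) • (x - J x)) (hJ x)
  have hnorm : ‖(1/γ) • (x - J x)‖ = (1/γ) * ‖x - J x‖ := by
    rw [norm_smul, Real.norm_eq_abs, abs_of_pos (one_div_pos.mpr hγ)]
  rw [hnorm] at hsr
  -- distance estimate: ‖x - p‖ ≤ (1 + κ/γ) ‖x - Jx‖
  have hd1 : Metric.infDist x Z ≤ Metric.infDist (J x) Z + dist x (J x) :=
    Metric.infDist_le_infDist_add_dist
  have hdist : dist x (J x) = ‖x - J x‖ := dist_eq_norm x (J x)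
  have hxp : ‖x - p‖ ≤ (1 + κ / γ) * ‖x - J x‖ := by
    rw [hnp]
    calc Metric.infDist x Z ≤ Metric.infDist (J x) Z + ‖x - J x‖ := by
          rw [← hdist]; exact hd1
      _ ≤ κ * (1/γ * ‖x - J x‖) + ‖x - J x‖ := by linarith
      _ = (1 + κ / γ) * ‖x - J x‖ := by ring
  -- key expansion
  have hyp : y - p = (x - p) - lam • (x - J x) := by rw [hy]; module
  have hexp : ‖y - p‖ ^ 2 = ‖x - p‖ ^ 2 - 2 * ⟪x - p, lam • (x - J x)⟫
      + ‖lam • (x - J x)‖ ^ 2 := by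
    rw [hyp]; exact norm_sub_sq_real _ _
  have hsplit : ⟪x - p, x - J x⟫ = ‖x - J x‖ ^ 2 + ⟪J x - p, x - J x⟫ := by
    have : x - p = (x - J x) + (J x - p) := by abel
    rw [this, inner_add_left, real_inner_self_eq_norm_sq]
  have hsm : ⟪x - p, lam • (x - J x)⟫ = lam * ⟪x - p, x - J x⟫ :=
    real_inner_smul_right _ _ _
  have hnsm : ‖lam • (x - J x)‖ ^ 2 = lam ^ 2 * ‖x - J x‖ ^ 2 := by
    rw [norm_smul, Real.norm_eq_abs, mul_pow, sq_abs]
  have hkey : ‖y - p‖ ^ 2 ≤ ‖x - p‖ ^ 2 - lam * (2 - lam) * ‖x - J x‖ ^ 2 := by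
    rw [hexp, hsm, hsplit, hnsm]; nlinarith
  -- conclude
  have ht0 : (0:ℝ) ≤ ‖x - J x‖ := norm_nonneg _
  have hs0 : (0:ℝ) ≤ ‖x - p‖ := norm_nonneg _
  have hsq : ‖y - p‖ ^ 2 ≤ (ρ * ‖x - p‖) ^ 2 := by
    have h2 : ‖x - p‖ ^ 2 ≤ (1 + κ / γ) ^ 2 * ‖x - J x‖ ^ 2 := by
      have := pow_le_pow_left₀ hs0 hxp 2
      rw [mul_pow] at this; exact this
    have h3 : lam * (2 - lam) / (1 + κ / γ) ^ 2 * ‖x - p‖ ^ 2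
        ≤ lam * (2 - lam) * ‖x - J x‖ ^ 2 := by
      have h4 := mul_le_mul_of_nonneg_left h2 hc0.le
      calc lam * (2 - lam) / (1 + κ / γ) ^ 2 * ‖x - p‖ ^ 2
          ≤ lam * (2 - lam) / (1 + κ / γ) ^ 2 * ((1 + κ / γ) ^ 2 * ‖x - J x‖ ^ 2) := h4
        _ = lam * (2 - lam) * ‖x - J x‖ ^ 2 := by
            field_simp
    calc ‖y - p‖ ^ 2 ≤ ‖x - p‖ ^ 2 - lam * (2 - lam) * ‖x - J x‖ ^ 2 := hkey
      _ ≤ ‖x - p‖ ^ 2 - lam * (2 - lam) / (1 + κ / γ) ^ 2 * ‖x - p‖ ^ 2 := by linarith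
      _ = (ρ * ‖x - p‖) ^ 2 := by rw [mul_pow, hρ2]; ring
  have hρs : 0 ≤ ρ * ‖x - p‖ := mul_nonneg hρmem.1.le hs0
  calc ‖y - p‖ = Real.sqrt (‖y - p‖ ^ 2) := (Real.sqrt_sq (norm_nonneg _)).symm
    _ ≤ Real.sqrt ((ρ * ‖x - p‖) ^ 2) := Real.sqrt_le_sqrt hsq
    _ = ρ * ‖x - p‖ := Real.sqrt_sq hρs
end

section
/- Let H be a real Hilbert space, let A : H → Set H be monotone, let γ > 0, and let x, z, p ∈ H satisfy 0 ∈ A z and (1/γ)·(x − p) ∈ A p (so p is the value at x of the resolvent of γA). Let t > 0 satisfy ‖p − z‖ ≤ t·‖x − p‖, let λ ∈ [0,1], and set y := (1−λ)x + λp. Then: if t² + λ − 1 ≤ 0, then ‖y − z‖² ≤ (1 − λ/(t+1))²·‖x − z‖²; and if t² + λ − 1 > 0, then ‖y − z‖² ≤ (1 − λ(2−λ)/(1+t²))·‖x − z‖². -/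
open scoped RealInnerProductSpace


/-- Pure real-number core of the argument. -/
theorem stmt9_core (t lam na nb s : ℝ) (ht : 0 < t) (hl0 : 0 ≤ lam) (hl1 : lam ≤ 1)
    (hs : 0 ≤ s) (hst : s ≤ t * na ^ 2) (hrt : nb ^ 2 ≤ t ^ 2 * na ^ 2) :
    (t ^ 2 + lam - 1 ≤ 0 →
      (1 - lam) ^ 2 * na ^ 2 + 2 * ((1 - lam) * s) + nb ^ 2 ≤
        (1 - lam / (t + 1)) ^ 2 * (na ^ 2 + 2 * s + nb ^ 2)) ∧
    (0 < t ^ 2 + lam - 1 →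
      (1 - lam) ^ 2 * na ^ 2 + 2 * ((1 - lam) * s) + nb ^ 2 ≤
        (1 - lam * (2 - lam) / (1 + t ^ 2)) * (na ^ 2 + 2 * s + nb ^ 2)) := by
  constructor
  · intro hcase
    have ht1 : (0:ℝ) < (t + 1) ^ 2 := by positivity
    have hfrac : (1 - lam / (t + 1)) = (t + 1 - lam) / (t + 1) := by field_simp
    rw [hfrac, div_pow, div_mul_eq_mul_div, le_div_iff₀ ht1]
    have h1 : (0:ℝ) ≤ (2 * lam * (1 - t ^ 2 - lam)) * (t * na ^ 2 - s) :=
      mul_nonneg (by nlinarith) (by linarith)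
    have h2 : (0:ℝ) ≤ (lam * (2 * (t + 1) - lam)) * (t ^ 2 * na ^ 2 - nb ^ 2) :=
      mul_nonneg (by nlinarith) (by linarith)
    have key : (t + 1 - lam) ^ 2 * (na ^ 2 + 2 * s + nb ^ 2) -
        ((1 - lam) ^ 2 * na ^ 2 + 2 * ((1 - lam) * s) + nb ^ 2) * (t + 1) ^ 2 =
        (2 * lam * (1 - t ^ 2 - lam)) * (t * na ^ 2 - s) +
          (lam * (2 * (t + 1) - lam)) * (t ^ 2 * na ^ 2 - nb ^ 2) := by ring
    linarith
  · intro hcase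
    have ht2 : (0:ℝ) < 1 + t ^ 2 := by positivity
    have hfrac : (1 - lam * (2 - lam) / (1 + t ^ 2)) =
        (1 + t ^ 2 - lam * (2 - lam)) / (1 + t ^ 2) := by field_simp
    rw [hfrac, div_mul_eq_mul_div, le_div_iff₀ ht2]
    have h1 : (0:ℝ) ≤ (2 * lam * (t ^ 2 + lam - 1)) * s :=
      mul_nonneg (by nlinarith) hs
    have h2 : (0:ℝ) ≤ (lam * (2 - lam)) * (t ^ 2 * na ^ 2 - nb ^ 2) :=
      mul_nonneg (by nlinarith) (by linarith)
    nlinarith [h1, h2]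


/-- Let `A` be monotone on a real Hilbert space, `γ > 0`, `0 ∈ A z`, and
`(1/γ)(x - p) ∈ A p` (so `p = J_{γA} x`).  Let `t > 0` with `‖p - z‖ ≤ t‖x - p‖`,
`λ ∈ [0,1]` and `y := (1-λ)x + λp`.  If `t² + λ - 1 ≤ 0` then
`‖y - z‖² ≤ (1 - λ/(t+1))²‖x - z‖²`, and if `t² + λ - 1 > 0` then
`‖y - z‖² ≤ (1 - λ(2-λ)/(1+t²))‖x - z‖²`. -/
theorem stmt_9 {H : Type*} [NormedAddCommGroup H] [InnerProductSpace ℝ H] [CompleteSpace H]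
    (A : H → Set H)
    (hmono : ∀ x y u v : H, u ∈ A x → v ∈ A y → 0 ≤ ⟪x - y, u - v⟫)
    (γ : ℝ) (hγ : 0 < γ)
    (x z p : H) (hz : (0 : H) ∈ A z) (hp : (1 / γ) • (x - p) ∈ A p)
    (t : ℝ) (ht : 0 < t) (htz : ‖p - z‖ ≤ t * ‖x - p‖)
    (lam : ℝ) (hlam : lam ∈ Set.Icc (0 : ℝ) 1)
    (y : H) (hy : y = (1 - lam) • x + lam • p) :
    (t ^ 2 + lam - 1 ≤ 0 → ‖y - z‖ ^ 2 ≤ (1 - lam / (t + 1)) ^ 2 * ‖x - z‖ ^ 2) ∧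
      (0 < t ^ 2 + lam - 1 →
        ‖y - z‖ ^ 2 ≤ (1 - lam * (2 - lam) / (1 + t ^ 2)) * ‖x - z‖ ^ 2) := by
  obtain ⟨hl0, hl1⟩ := hlam
  have hmon := hmono p z ((1 / γ) • (x - p)) 0 hp hz
  rw [sub_zero, real_inner_smul_right] at hmon
  have hs : 0 ≤ ⟪x - p, p - z⟫ := by
    rw [real_inner_comm]
    nlinarith [hmon, one_div_pos.mpr hγ]
  have hxz : x - z = (x - p) + (p - z) := by abel
  have hyz : y - z = (1 - lam) • (x - p) + (p - z) := by rw [hy]; module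
  have e1 : ‖x - z‖ ^ 2 = ‖x - p‖ ^ 2 + 2 * ⟪x - p, p - z⟫ + ‖p - z‖ ^ 2 := by
    rw [hxz]; exact norm_add_sq_real _ _
  have e2 : ‖y - z‖ ^ 2 = (1 - lam) ^ 2 * ‖x - p‖ ^ 2 + 2 * ((1 - lam) * ⟪x - p, p - z⟫)
      + ‖p - z‖ ^ 2 := by
    rw [hyz, norm_add_sq_real, real_inner_smul_left, norm_smul,
      Real.norm_of_nonneg (by linarith : (0:ℝ) ≤ 1 - lam)]
    ring
  have hcs : ⟪x - p, p - z⟫ ≤ ‖x - p‖ * ‖p - z‖ := real_inner_le_norm _ _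
  have hna : (0:ℝ) ≤ ‖x - p‖ := norm_nonneg _
  have hnb : (0:ℝ) ≤ ‖p - z‖ := norm_nonneg _
  have hst : ⟪x - p, p - z⟫ ≤ t * ‖x - p‖ ^ 2 := by nlinarith
  have hrt : ‖p - z‖ ^ 2 ≤ t ^ 2 * ‖x - p‖ ^ 2 := by nlinarith
  rw [e1, e2]
  exact stmt9_core t lam ‖x - p‖ ‖p - z‖ ⟪x - p, p - z⟫ ht hl0 hl1 hs hst hrt
end

section
/- Let H be a real Hilbert space, let A : H → Set H be monotone, let γ > 0, and let x, z, p ∈ H satisfy 0 ∈ A z and (1/γ)·(x − p) ∈ A p (so p is the value at x of the resolvent of γA). Let t > 0 satisfy ‖p − z‖ ≤ t·‖x − p‖, let λ ∈ [1,2], and set y := (1−λ)x + λp. Then ‖y − z‖² ≤ (1 − λ(2−λ)/(1+t²))·‖x − z‖². -/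
open scoped RealInnerProductSpace

/-!
Monotonicity of `A` between the pairs `(p, (x - p)/γ)` and `(z, 0)` gives `⟪x - p, p - z⟫ ≥ 0`.
With `u := x - p` and `w := p - z` we have `x - z = u + w` and `y - z = (1 - λ) u + w`, and
expanding both squared norms reduces the claim to an inequality between `‖u‖`, `‖w‖` and
`⟪u, w⟫` that follows from `‖w‖ ≤ t ‖u‖`, `⟪u, w⟫ ≥ 0` and `1 ≤ λ ≤ 2`.
-/

section

variable {H : Type*} [NormedAddCommGroup H] [InnerProductSpace ℝ H]

theorem inner_sub_resolvent_nonneg {A : H → Set H}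
    (hmono : ∀ x y u v : H, u ∈ A x → v ∈ A y → 0 ≤ ⟪x - y, u - v⟫)
    {γ : ℝ} (hγ : 0 < γ) {x z p : H} (hz : (0 : H) ∈ A z) (hp : (1 / γ) • (x - p) ∈ A p) :
    0 ≤ ⟪x - p, p - z⟫ := by
  have h := hmono p z _ 0 hp hz
  rw [sub_zero, real_inner_smul_right, real_inner_comm] at h
  exact nonneg_of_mul_nonneg_right h (by positivity)

theorem norm_one_sub_smul_add_sq_le {u w : H} {t lam : ℝ} (hc : 0 ≤ ⟪u, w⟫)
    (hw : ‖w‖ ≤ t * ‖u‖) (hlam : lam ∈ Set.Icc (1 : ℝ) 2) :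
    ‖(1 - lam) • u + w‖ ^ 2 ≤ (1 - lam * (2 - lam) / (1 + t ^ 2)) * ‖u + w‖ ^ 2 := by
  obtain ⟨hlam₁, hlam₂⟩ := hlam
  have hw_sq : ‖w‖ ^ 2 ≤ t ^ 2 * ‖u‖ ^ 2 := by
    rw [← mul_pow]; exact pow_le_pow_left₀ (norm_nonneg w) hw 2
  have hyz : ‖(1 - lam) • u + w‖ ^ 2 =
      (1 - lam) ^ 2 * ‖u‖ ^ 2 + 2 * (1 - lam) * ⟪u, w⟫ + ‖w‖ ^ 2 := by
    rw [norm_add_sq_real, norm_smul, real_inner_smul_left, mul_pow, Real.norm_eq_abs, sq_abs]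
    ring
  have hm : 0 ≤ lam * (2 - lam) := by nlinarith
  have hc' : 0 ≤ lam * (t ^ 2 + lam - 1) := by nlinarith [sq_nonneg t]
  rw [hyz, norm_add_sq_real, one_sub_div (by positivity), div_mul_eq_mul_div,
    le_div_iff₀ (by positivity)]
  -- the difference of the two sides is `λ(2-λ)(t²‖u‖² - ‖w‖²) + 2λ(t² + λ - 1)⟪u, w⟫`
  nlinarith [mul_nonneg hm (sub_nonneg.2 hw_sq), mul_nonneg hc' hc]

end

theorem stmt_10_general {H : Type*} [NormedAddCommGroup H] [InnerProductSpace ℝ H]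
    (A : H → Set H)
    (hmono : ∀ x y u v : H, u ∈ A x → v ∈ A y → 0 ≤ ⟪x - y, u - v⟫)
    (γ : ℝ) (hγ : 0 < γ)
    (x z p : H) (hz : (0 : H) ∈ A z) (hp : (1 / γ) • (x - p) ∈ A p)
    (t : ℝ) (htz : ‖p - z‖ ≤ t * ‖x - p‖)
    (lam : ℝ) (hlam : lam ∈ Set.Icc (1 : ℝ) 2)
    (y : H) (hy : y = (1 - lam) • x + lam • p) :
    ‖y - z‖ ^ 2 ≤ (1 - lam * (2 - lam) / (1 + t ^ 2)) * ‖x - z‖ ^ 2 := by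
  have hyz : y - z = (1 - lam) • (x - p) + (p - z) := by rw [hy]; module
  have hxz : x - z = (x - p) + (p - z) := by abel
  rw [hyz, hxz]
  exact norm_one_sub_smul_add_sq_le (inner_sub_resolvent_nonneg hmono hγ hz hp) htz hlam

/-- Let `A` be monotone on a real Hilbert space, `γ > 0`, `0 ∈ A z`, and
`(1/γ)(x - p) ∈ A p` (so `p = J_{γA} x`).  Let `t > 0` with `‖p - z‖ ≤ t‖x - p‖`,
`λ ∈ [1,2]` and `y := (1-λ)x + λp`.  Then
`‖y - z‖² ≤ (1 - λ(2-λ)/(1+t²))‖x - z‖²`. -/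
theorem stmt_10 {H : Type*} [NormedAddCommGroup H] [InnerProductSpace ℝ H] [CompleteSpace H]
    (A : H → Set H)
    (hmono : ∀ x y u v : H, u ∈ A x → v ∈ A y → 0 ≤ ⟪x - y, u - v⟫)
    (γ : ℝ) (hγ : 0 < γ)
    (x z p : H) (hz : (0 : H) ∈ A z) (hp : (1 / γ) • (x - p) ∈ A p)
    (t : ℝ) (ht : 0 < t) (htz : ‖p - z‖ ≤ t * ‖x - p‖)
    (lam : ℝ) (hlam : lam ∈ Set.Icc (1 : ℝ) 2)
    (y : H) (hy : y = (1 - lam) • x + lam • p) :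
    ‖y - z‖ ^ 2 ≤ (1 - lam * (2 - lam) / (1 + t ^ 2)) * ‖x - z‖ ^ 2 :=
  stmt_10_general A hmono γ hγ x z p hz hp t htz lam hlam y hy
end

section
/- Let H be a real Hilbert space, let A : H → Set H be monotone, let γ > 0, and let x, z, p ∈ H satisfy 0 ∈ A z and (1/γ)·(x − p) ∈ A p (so p is the value at x of the resolvent of γA). Let t > 0 satisfy ‖p − z‖ ≤ t·‖x − p‖, let λ ∈ (0,2), and set y := (1−λ)x + λp and ρ := max{ (1 − λ/(t+1))², 1 − λ(2−λ)/(1+t²) }. Then ρ ∈ (0,1) and ‖y − z‖² ≤ ρ·‖x − z‖². -/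
open scoped RealInnerProductSpace

private lemma stmt_11_key {a b c t lam ρ : ℝ} (hann : 0 ≤ a) (hbta : b ≤ t * a)
    (hcnn : 0 ≤ c) (hcab : c ≤ a * b) (hbnn : 0 ≤ b) (hρlt : ρ < 1)
    (hρ1' : (t + 1 - lam) ^ 2 ≤ ρ * (t + 1) ^ 2)
    (hρ2' : (1 - lam) ^ 2 + t ^ 2 ≤ ρ * (1 + t ^ 2)) :
    (1 - lam) ^ 2 * a ^ 2 + 2 * (1 - lam) * c + b ^ 2 ≤ ρ * (a ^ 2 + 2 * c + b ^ 2) := by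
  have hb2 : b ^ 2 ≤ t ^ 2 * a ^ 2 := by nlinarith
  have h3 : (1 - ρ) * b ^ 2 ≤ (1 - ρ) * (t ^ 2 * a ^ 2) :=
    mul_le_mul_of_nonneg_left hb2 (by linarith)
  rcases le_or_gt (1 - lam) ρ with hcase | hcase
  · have h1 : 0 ≤ 2 * (ρ - (1 - lam)) * c :=
      mul_nonneg (by linarith) hcnn
    have h4 : ((1 - lam) ^ 2 + t ^ 2) * a ^ 2 ≤ ρ * (1 + t ^ 2) * a ^ 2 :=
      mul_le_mul_of_nonneg_right hρ2' (sq_nonneg a)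
    nlinarith [h1, h3, h4]
  · have h1 : 2 * (1 - lam - ρ) * c ≤ 2 * (1 - lam - ρ) * (a * b) := by
      have := mul_le_mul_of_nonneg_left hcab (by linarith : (0:ℝ) ≤ 2 * (1 - lam - ρ)); linarith
    have h2 : (1 - lam - ρ) * (a * b) ≤ (1 - lam - ρ) * (a * (t * a)) := by
      apply mul_le_mul_of_nonneg_left _ (by linarith)
      exact mul_le_mul_of_nonneg_left hbta hann
    have h4 : (t + 1 - lam) ^ 2 * a ^ 2 ≤ ρ * (t + 1) ^ 2 * a ^ 2 :=
      mul_le_mul_of_nonneg_right hρ1' (sq_nonneg a)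
    nlinarith [h1, h2, h3, h4]

/-- Let `A` be monotone on a real Hilbert space, `γ > 0`, `0 ∈ A z`, and
`(1/γ)(x - p) ∈ A p` (so `p = J_{γA} x`).  Let `t > 0` with `‖p - z‖ ≤ t‖x - p‖`,
`λ ∈ (0,2)`, `y := (1-λ)x + λp`, and
`ρ := max{(1 - λ/(t+1))², 1 - λ(2-λ)/(1+t²)}`.  Then `ρ ∈ (0,1)` and
`‖y - z‖² ≤ ρ‖x - z‖²`. -/
theorem stmt_11 {H : Type*} [NormedAddCommGroup H] [InnerProductSpace ℝ H] [CompleteSpace H]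
    (A : H → Set H)
    (hmono : ∀ x y u v : H, u ∈ A x → v ∈ A y → 0 ≤ ⟪x - y, u - v⟫)
    (γ : ℝ) (hγ : 0 < γ)
    (x z p : H) (hz : (0 : H) ∈ A z) (hp : (1 / γ) • (x - p) ∈ A p)
    (t : ℝ) (ht : 0 < t) (htz : ‖p - z‖ ≤ t * ‖x - p‖)
    (lam : ℝ) (hlam : lam ∈ Set.Ioo (0 : ℝ) 2)
    (y : H) (hy : y = (1 - lam) • x + lam • p)
    (ρ : ℝ) (hρ : ρ = max ((1 - lam / (t + 1)) ^ 2) (1 - lam * (2 - lam) / (1 + t ^ 2))) :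
    ρ ∈ Set.Ioo (0 : ℝ) 1 ∧ ‖y - z‖ ^ 2 ≤ ρ * ‖x - z‖ ^ 2 := by
  obtain ⟨hl0, hl2⟩ := hlam
  have ht1 : (0:ℝ) < t + 1 := by linarith
  have ht2 : (0:ℝ) < 1 + t ^ 2 := by positivity
  -- ρ bounds
  have hρ1 : (1 - lam / (t + 1)) ^ 2 ≤ ρ := hρ ▸ le_max_left _ _
  have hρ2 : 1 - lam * (2 - lam) / (1 + t ^ 2) ≤ ρ := hρ ▸ le_max_right _ _
  have hρ1' : (t + 1 - lam) ^ 2 ≤ ρ * (t + 1) ^ 2 := by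
    have h : (t + 1 - lam) ^ 2 = (1 - lam / (t + 1)) ^ 2 * (t + 1) ^ 2 := by
      field_simp
      try ring
    rw [h]
    exact mul_le_mul_of_nonneg_right hρ1 (sq_nonneg _)
  have hρ2' : (1 - lam) ^ 2 + t ^ 2 ≤ ρ * (1 + t ^ 2) := by
    have h : (1 - lam * (2 - lam) / (1 + t ^ 2)) * (1 + t ^ 2) = (1 - lam) ^ 2 + t ^ 2 := by
      field_simp
      try ring
    nlinarith
  have hρpos : 0 < ρ := by
    have : lam * (2 - lam) / (1 + t ^ 2) < 1 := by
      rw [div_lt_one ht2]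
      nlinarith [sq_nonneg (1 - lam)]
    linarith
  have hρlt : ρ < 1 := by
    rw [hρ, max_lt_iff]
    constructor
    · have h1 : 0 < lam / (t + 1) := by positivity
      have h2 : lam / (t + 1) < 2 := by
        rw [div_lt_iff₀ ht1]; nlinarith
      nlinarith
    · have : 0 < lam * (2 - lam) / (1 + t ^ 2) := by
        apply div_pos (by nlinarith) ht2
      linarith
  refine ⟨⟨hρpos, hρlt⟩, ?_⟩
  -- monotonicity gives 0 ≤ ⟪x - p, p - z⟫
  set a := ‖x - p‖ with ha
  set b := ‖p - z‖ with hb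
  set c := ⟪x - p, p - z⟫ with hc
  have hmon := hmono p z ((1 / γ) • (x - p)) 0 hp hz
  have hcnn : 0 ≤ c := by
    have h1 : ⟪p - z, (1 / γ) • (x - p) - 0⟫ = (1 / γ) * ⟪p - z, x - p⟫ := by
      rw [sub_zero, real_inner_smul_right]
    have h2 : 0 ≤ ⟪p - z, x - p⟫ := by
      rw [h1] at hmon
      have := mul_nonneg (le_of_lt hγ) hmon
      rw [← mul_assoc, mul_one_div, div_self (ne_of_gt hγ), one_mul] at this
      exact this
    rw [hc, real_inner_comm]; exact h2
  have hcab : c ≤ a * b := real_inner_le_norm _ _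
  have hann : 0 ≤ a := norm_nonneg _
  have hbnn : 0 ≤ b := norm_nonneg _
  -- expand norms
  have hxz : ‖x - z‖ ^ 2 = a ^ 2 + 2 * c + b ^ 2 := by
    have h : x - z = (x - p) + (p - z) := by abel
    rw [h, norm_add_sq_real, ha, hb, hc]
    try ring
  have hyz : ‖y - z‖ ^ 2 = (1 - lam) ^ 2 * a ^ 2 + 2 * (1 - lam) * c + b ^ 2 := by
    have h : y - z = (1 - lam) • (x - p) + (p - z) := by
      rw [hy]; module
    rw [h, norm_add_sq_real, norm_smul, real_inner_smul_left,
      Real.norm_eq_abs, mul_pow, sq_abs]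
    try ring
  rw [hxz, hyz]
  exact stmt_11_key hann htz hcnn hcab hbnn hρlt hρ1' hρ2'
end

section
/- Let H be a real Hilbert space, let A : H → Set H be monotone with Z := {z ∈ H : 0 ∈ A z} nonempty, let γ > 0, and let J : H → H satisfy (1/γ)·(w − J w) ∈ A(J w) for every w ∈ H (so J is the resolvent of γA). Let x̄ ∈ Z and assume the metric subregularity condition: there exist κ > 0 and δ > 0 such that for every w with ‖w − x̄‖ ≤ δ and every u ∈ A w, infDist(w, Z) ≤ κ·‖u‖. Let λ ∈ (0,2), let x ∈ H with ‖J x − x̄‖ ≤ δ, and set y := (1−λ)x + λ·(J x) and ρ := (max{ (1 − λ/(κ/γ + 1))², 1 − λ(2−λ)/(1 + κ²/γ²) })^{1/2}. Then ρ ∈ (0,1) and, for every p ∈ Z with ‖J x − p‖ = infDist(J x, Z), one has ‖y − p‖ ≤ ρ·‖x − p‖. In particular, if Z = {x̄} then ‖y − x̄‖ ≤ ρ·‖x − x̄‖. -/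
open scoped RealInnerProductSpace

lemma aux_core (lam c t s d : ℝ) (hl0 : 0 < lam) (hl2 : lam < 2) (hc : 0 < c)
    (ht : 0 ≤ t) (hdn : 0 ≤ d) (hs : 0 ≤ s) (hdc : d ≤ c * t) (hstd : s ≤ t * d) :
    (1 - lam) ^ 2 * t ^ 2 + 2 * (1 - lam) * s + d ^ 2 ≤
      max ((1 - lam / (c + 1)) ^ 2) (1 - lam * (2 - lam) / (1 + c ^ 2)) *
        (t ^ 2 + 2 * s + d ^ 2) := by
  have hX : (0:ℝ) ≤ t ^ 2 + 2 * s + d ^ 2 := by positivity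
  rcases le_or_gt (1 - lam) (c ^ 2) with hcase | hcase
  · refine le_trans ?_ (mul_le_mul_of_nonneg_right (le_max_right _ _) hX)
    have h1c : (0:ℝ) < 1 + c ^ 2 := by positivity
    have h2 : (1 - lam * (2 - lam) / (1 + c ^ 2)) * (t ^ 2 + 2 * s + d ^ 2)
        = (((1 + c ^ 2) - lam * (2 - lam)) * (t ^ 2 + 2 * s + d ^ 2)) / (1 + c ^ 2) := by
      field_simp
    rw [h2, le_div_iff₀ h1c]
    nlinarith [mul_nonneg (mul_nonneg hl0.le (by linarith : (0:ℝ) ≤ 2 - lam))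
        (by nlinarith : (0:ℝ) ≤ c ^ 2 * t ^ 2 - d ^ 2),
      mul_nonneg (mul_nonneg hl0.le hs) (by linarith : (0:ℝ) ≤ c ^ 2 - 1 + lam)]
  · refine le_trans ?_ (mul_le_mul_of_nonneg_right (le_max_left _ _) hX)
    have hc1 : (0:ℝ) < c + 1 := by linarith
    have hl1 : lam < 1 := by nlinarith
    have hq : (0:ℝ) ≤ c + 1 - lam := by linarith
    have h2 : (1 - lam / (c + 1)) ^ 2 * (t ^ 2 + 2 * s + d ^ 2)
        = ((c + 1 - lam) ^ 2 * (t ^ 2 + 2 * s + d ^ 2)) / (c + 1) ^ 2 := by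
      field_simp
    rw [h2, le_div_iff₀ (by positivity)]
    have hA : (0:ℝ) ≤ (c + 1 - lam) * (t + d) + (c + 1) * ((1 - lam) * t + d) := by
      nlinarith [mul_nonneg hq (add_nonneg ht hdn),
        mul_nonneg hc1.le (add_nonneg (mul_nonneg (by linarith : (0:ℝ) ≤ 1 - lam) ht) hdn)]
    nlinarith [mul_nonneg (mul_nonneg hl0.le (by linarith : (0:ℝ) ≤ c * t - d)) hA,
      mul_nonneg (mul_nonneg (by linarith : (0:ℝ) ≤ t * d - s) hl0.le)
        (by linarith : (0:ℝ) ≤ 1 - lam - c ^ 2)]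

/-- Let `A` be monotone on a real Hilbert space with `Z := zer A` nonempty,
`γ > 0`, `J` the resolvent of `γA`, `x̄ ∈ Z`, and assume metric subregularity with
constants `κ > 0`, `δ > 0`.  Let `λ ∈ (0,2)`, `‖Jx - x̄‖ ≤ δ`, `y := (1-λ)x + λ(Jx)` and
`ρ := (max{(1 - λ/(κ/γ+1))², 1 - λ(2-λ)/(1+κ²/γ²)})^{1/2}`.  Then `ρ ∈ (0,1)` and
`‖y - p‖ ≤ ρ‖x - p‖` for every nearest point `p` of `Jx` in `Z`; in particular, if
`Z = {x̄}` then `‖y - x̄‖ ≤ ρ‖x - x̄‖`. -/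
theorem stmt_12 {H : Type*} [NormedAddCommGroup H] [InnerProductSpace ℝ H] [CompleteSpace H]
    (A : H → Set H)
    (hmono : ∀ x y u v : H, u ∈ A x → v ∈ A y → 0 ≤ ⟪x - y, u - v⟫)
    (Z : Set H) (hZ : Z = {z : H | (0 : H) ∈ A z}) (hZne : Z.Nonempty)
    (γ : ℝ) (hγ : 0 < γ)
    (J : H → H) (hJ : ∀ w : H, (1 / γ) • (w - J w) ∈ A (J w))
    (xbar : H) (hxbar : xbar ∈ Z)
    (κ δ : ℝ) (hκ : 0 < κ) (hδ : 0 < δ)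
    (hsub : ∀ w : H, ‖w - xbar‖ ≤ δ → ∀ u ∈ A w, Metric.infDist w Z ≤ κ * ‖u‖)
    (lam : ℝ) (hlam : lam ∈ Set.Ioo (0 : ℝ) 2)
    (x : H) (hJx : ‖J x - xbar‖ ≤ δ)
    (y : H) (hy : y = (1 - lam) • x + lam • J x)
    (ρ : ℝ)
    (hρ : ρ = Real.sqrt (max ((1 - lam / (κ / γ + 1)) ^ 2)
      (1 - lam * (2 - lam) / (1 + κ ^ 2 / γ ^ 2)))) :
    ρ ∈ Set.Ioo (0 : ℝ) 1 ∧
      (∀ p ∈ Z, ‖J x - p‖ = Metric.infDist (J x) Z → ‖y - p‖ ≤ ρ * ‖x - p‖) ∧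
      (Z = {xbar} → ‖y - xbar‖ ≤ ρ * ‖x - xbar‖) := by
  obtain ⟨hl0, hl2⟩ := hlam
  set c : ℝ := κ / γ with hcdef
  have hc : 0 < c := div_pos hκ hγ
  have hc2 : κ ^ 2 / γ ^ 2 = c ^ 2 := by rw [hcdef, div_pow]
  set M : ℝ := max ((1 - lam / (c + 1)) ^ 2) (1 - lam * (2 - lam) / (1 + c ^ 2)) with hMdef
  have hρM : ρ = Real.sqrt M := by rw [hρ, hMdef, hc2]
  have h1c : (0:ℝ) < 1 + c ^ 2 := by positivity
  -- M bounds
  have hbpos : 0 < 1 - lam * (2 - lam) / (1 + c ^ 2) := by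
    rw [sub_pos, div_lt_one h1c]
    nlinarith [sq_nonneg (1 - lam), sq_nonneg c, hc]
  have hMpos : 0 < M := lt_of_lt_of_le hbpos (le_max_right _ _)
  have hMlt1 : M < 1 := by
    apply max_lt
    · have h1 : 0 < lam / (c + 1) := by positivity
      have h2 : lam / (c + 1) < 2 := by
        rw [div_lt_iff₀ (by linarith)]; nlinarith
      nlinarith
    · have : 0 < lam * (2 - lam) / (1 + c ^ 2) := div_pos (by nlinarith) h1c
      linarith
  have hρpos : 0 < ρ := by rw [hρM]; exact Real.sqrt_pos.2 hMpos
  have hρlt1 : ρ < 1 := by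
    rw [hρM]
    calc Real.sqrt M < Real.sqrt 1 := by
          exact Real.sqrt_lt_sqrt hMpos.le hMlt1
      _ = 1 := Real.sqrt_one
  have hρsq : ρ ^ 2 = M := by rw [hρM, Real.sq_sqrt hMpos.le]
  -- main contraction estimate
  have main : ∀ p ∈ Z, ‖J x - p‖ = Metric.infDist (J x) Z → ‖y - p‖ ≤ ρ * ‖x - p‖ := by
    intro p hp hpnear
    have hp0 : (0 : H) ∈ A p := by rw [hZ] at hp; exact hp
    set t : ℝ := ‖x - J x‖ with htdef
    set d : ℝ := ‖J x - p‖ with hddef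
    set s : ℝ := ⟪x - J x, J x - p⟫ with hsdef
    have ht : 0 ≤ t := norm_nonneg _
    have hdn : 0 ≤ d := norm_nonneg _
    -- monotonicity gives s ≥ 0
    have hs : 0 ≤ s := by
      have h := hmono (J x) p ((1 / γ) • (x - J x)) 0 (hJ x) hp0
      rw [sub_zero, real_inner_smul_right] at h
      have h' : 0 ≤ ⟪J x - p, x - J x⟫ := nonneg_of_mul_nonneg_right h (by positivity)
      rwa [real_inner_comm] at h'
    -- Cauchy-Schwarz
    have hstd : s ≤ t * d := real_inner_le_norm _ _
    -- subregularity gives d ≤ c * t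
    have hdc : d ≤ c * t := by
      have h := hsub (J x) hJx _ (hJ x)
      rw [← hpnear] at h
      have hn : ‖(1 / γ) • (x - J x)‖ = (1 / γ) * t := by
        rw [norm_smul, Real.norm_eq_abs, abs_of_pos (by positivity)]
      rw [hn] at h
      calc d ≤ κ * ((1 / γ) * t) := h
        _ = c * t := by rw [hcdef]; ring
    -- norm identities
    have hxp : x - p = (x - J x) + (J x - p) := by abel
    have hxpsq : ‖x - p‖ ^ 2 = t ^ 2 + 2 * s + d ^ 2 := by
      rw [hxp, @norm_add_sq_real]
    have hyp : y - p = (1 - lam) • (x - J x) + (J x - p) := by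
      rw [hy]; module
    have hypsq : ‖y - p‖ ^ 2 = (1 - lam) ^ 2 * t ^ 2 + 2 * (1 - lam) * s + d ^ 2 := by
      rw [hyp, @norm_add_sq_real, norm_smul, real_inner_smul_left, Real.norm_eq_abs,
        mul_pow, sq_abs]
      ring
    have hkey : ‖y - p‖ ^ 2 ≤ (ρ * ‖x - p‖) ^ 2 := by
      rw [hypsq, mul_pow, hρsq, hxpsq]
      exact aux_core lam c t s d hl0 hl2 hc ht hdn hs hdc hstd
    have := Real.sqrt_le_sqrt hkey
    rwa [Real.sqrt_sq (norm_nonneg _),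
      Real.sqrt_sq (mul_nonneg hρpos.le (norm_nonneg _))] at this
  refine ⟨⟨hρpos, hρlt1⟩, main, ?_⟩
  intro hZsing
  apply main xbar hxbar
  rw [hZsing, Metric.infDist_singleton, dist_eq_norm]
end

section
/- Let H be a real Hilbert space, let A : H → Set H be monotone, let γ > 0, and let J : H → H satisfy (1/γ)·(w − J w) ∈ A(J w) for every w ∈ H (so J is the resolvent of γA). Suppose A⁻¹ is Lipschitz continuous at 0 with modulus α > 0: there is a point x̄ with {z ∈ H : 0 ∈ A z} = {x̄} and there exists τ > 0 such that ‖z − x̄‖ ≤ α·‖w‖ whenever w ∈ A z and ‖w‖ ≤ τ. Let λ ∈ (0,2), let x ∈ H with ‖(1/γ)·(x − J x)‖ ≤ τ, and set y := (1−λ)x + λ·(J x) and ρ := (max{ (1 − λ/(α/γ + 1))², 1 − λ(2−λ)/(1 + α²/γ²) })^{1/2}. Then ρ ∈ (0,1) and ‖y − x̄‖ ≤ ρ·‖x − x̄‖. -/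
open scoped RealInnerProductSpace

lemma key_scalar (κ lam m n t : ℝ) (hκ : 0 < κ) (hl1 : 0 < lam) (hl2 : lam < 2)
    (hm : 0 ≤ m) (hn : 0 ≤ n) (hmn : m ≤ κ * n) (ht0 : 0 ≤ t) (htc : t ≤ m * n) :
    m^2 + 2*(1-lam)*t + (1-lam)^2*n^2 ≤
      max ((1 - lam/(κ+1))^2) (1 - lam*(2-lam)/(1+κ^2)) * (m^2 + 2*t + n^2) := by
  have hD : 0 ≤ m^2 + 2*t + n^2 := by nlinarith
  have hd2 : (0:ℝ) < 1 + κ^2 := by nlinarith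
  have hd1 : (0:ℝ) < κ + 1 := by linarith
  have hm2 : m^2 ≤ κ^2 * n^2 := by nlinarith
  by_cases hcase : 1 - lam - κ^2 ≤ 0
  · have hc : lam*(2-lam)/(1+κ^2) * (1+κ^2) = lam*(2-lam) := div_mul_cancel₀ _ hd2.ne'
    have h2 : m^2 + 2*(1-lam)*t + (1-lam)^2*n^2 ≤
        (1 - lam*(2-lam)/(1+κ^2)) * (m^2 + 2*t + n^2) := by
      set c := lam*(2-lam)/(1+κ^2) with hcdef
      have h3 : 0 ≤ 2*lam*t*(κ^2+lam-1) + lam*(2-lam)*(κ^2*n^2 - m^2) := by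
        have ha := mul_nonneg (by nlinarith : (0:ℝ) ≤ 2*lam*t) (by linarith : (0:ℝ) ≤ κ^2+lam-1)
        have hb := mul_nonneg (by nlinarith : (0:ℝ) ≤ lam*(2-lam))
          (by linarith : (0:ℝ) ≤ κ^2*n^2 - m^2)
        nlinarith
      nlinarith [hc, hd2]
    calc m^2 + 2*(1-lam)*t + (1-lam)^2*n^2 ≤ (1 - lam*(2-lam)/(1+κ^2)) * (m^2 + 2*t + n^2) := h2
      _ ≤ _ := mul_le_mul_of_nonneg_right (le_max_right _ _) hD
  · push_neg at hcase
    set μ := lam/(κ+1) with hμdef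
    have hμ : μ * (κ+1) = lam := div_mul_cancel₀ _ hd1.ne'
    have hμpos : 0 < μ := div_pos hl1 hd1
    have hμκ : μ ≤ 1 - κ := by
      have hκ1 : κ < 1 := by nlinarith
      rw [hμdef, div_le_iff₀ hd1]; nlinarith
    have hlam1 : lam < 1 := by nlinarith
    have h1 : 0 ≤ (1-μ)*(m+n) - (m+(1-lam)*n) := by
      have he : (1-μ)*(m+n) - (m+(1-lam)*n) = μ*(κ*n - m) := by linear_combination (-n) * hμ
      rw [he]; exact mul_nonneg hμpos.le (by linarith)
    have h2 : 0 ≤ (1-μ)*(m+n) + (m+(1-lam)*n) := by nlinarith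
    have h3 : (m+(1-lam)*n)^2 ≤ ((1-μ)*(m+n))^2 := by nlinarith [mul_nonneg h1 h2]
    have hcoef : 0 ≤ (1-lam) - (1-μ)^2 := by
      have he : (1-lam) - (1-μ)^2 = μ*(1-κ-μ) := by linear_combination hμ
      rw [he]; exact mul_nonneg hμpos.le (by linarith)
    have hprod : 0 ≤ ((1-lam) - (1-μ)^2) * (m*n - t) := mul_nonneg hcoef (by linarith)
    have hid : (1-μ)^2*(m^2+2*t+n^2) - (m^2 + 2*(1-lam)*t + (1-lam)^2*n^2)
        = (((1-μ)*(m+n))^2 - (m+(1-lam)*n)^2) + 2*(((1-lam)-(1-μ)^2)*(m*n - t)) := by ring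
    have hfin : m^2 + 2*(1-lam)*t + (1-lam)^2*n^2 ≤ (1-μ)^2 * (m^2 + 2*t + n^2) := by
      linarith [hid, h3, hprod]
    calc m^2 + 2*(1-lam)*t + (1-lam)^2*n^2 ≤ (1-μ)^2 * (m^2 + 2*t + n^2) := hfin
      _ ≤ _ := mul_le_mul_of_nonneg_right (le_max_left _ _) hD

/-- Let `A` be monotone on a real Hilbert space, `γ > 0`, `J` the resolvent
of `γA`, and suppose `A⁻¹` is Lipschitz continuous at `0` with modulus `α > 0` and
witness `τ > 0` (with `zer A = {x̄}`).  Let `λ ∈ (0,2)`, `‖(1/γ)(x - Jx)‖ ≤ τ`,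
`y := (1-λ)x + λ(Jx)` and
`ρ := (max{(1 - λ/(α/γ+1))², 1 - λ(2-λ)/(1+α²/γ²)})^{1/2}`.  Then `ρ ∈ (0,1)` and
`‖y - x̄‖ ≤ ρ‖x - x̄‖`. -/
theorem stmt_13 {H : Type*} [NormedAddCommGroup H] [InnerProductSpace ℝ H] [CompleteSpace H]
    (A : H → Set H)
    (hmono : ∀ x y u v : H, u ∈ A x → v ∈ A y → 0 ≤ ⟪x - y, u - v⟫)
    (γ : ℝ) (hγ : 0 < γ)
    (J : H → H) (hJ : ∀ w : H, (1 / γ) • (w - J w) ∈ A (J w))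
    (xbar : H) (hzer : {z : H | (0 : H) ∈ A z} = {xbar})
    (α τ : ℝ) (hα : 0 < α) (hτ : 0 < τ)
    (hLip : ∀ z w : H, w ∈ A z → ‖w‖ ≤ τ → ‖z - xbar‖ ≤ α * ‖w‖)
    (lam : ℝ) (hlam : lam ∈ Set.Ioo (0 : ℝ) 2)
    (x : H) (hx : ‖(1 / γ) • (x - J x)‖ ≤ τ)
    (y : H) (hy : y = (1 - lam) • x + lam • J x)
    (ρ : ℝ)
    (hρ : ρ = Real.sqrt (max ((1 - lam / (α / γ + 1)) ^ 2)
      (1 - lam * (2 - lam) / (1 + α ^ 2 / γ ^ 2)))) :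
    ρ ∈ Set.Ioo (0 : ℝ) 1 ∧ ‖y - xbar‖ ≤ ρ * ‖x - xbar‖ := by
  obtain ⟨hl1, hl2⟩ := hlam
  set κ := α / γ with hκdef
  have hκpos : 0 < κ := div_pos hα hγ
  have hκsq : 1 + α ^ 2 / γ ^ 2 = 1 + κ ^ 2 := by rw [hκdef, div_pow]
  set M := max ((1 - lam / (κ + 1)) ^ 2) (1 - lam * (2 - lam) / (1 + κ ^ 2)) with hMdef
  have hρM : ρ = Real.sqrt M := by rw [hρ, hMdef, hκsq]
  have hd1 : (0:ℝ) < κ + 1 := by linarith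
  have hd2 : (0:ℝ) < 1 + κ ^ 2 := by nlinarith
  -- bounds on M
  have hM1 : M < 1 := by
    apply max_lt
    · have h1 : 0 < lam / (κ + 1) := div_pos hl1 hd1
      have h2 : lam / (κ + 1) < 2 := by rw [div_lt_iff₀ hd1]; nlinarith
      nlinarith
    · have : 0 < lam * (2 - lam) / (1 + κ ^ 2) := div_pos (by nlinarith) hd2
      linarith
  have hM0 : 0 < M := by
    have hT2 : 0 < 1 - lam * (2 - lam) / (1 + κ ^ 2) := by
      have : lam * (2 - lam) / (1 + κ ^ 2) < 1 := by
        rw [div_lt_one hd2]; nlinarith [sq_nonneg (lam - 1), sq_nonneg κ]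
      linarith
    exact lt_of_lt_of_le hT2 (le_max_right _ _)
  have hρ0 : 0 < ρ := by rw [hρM]; exact Real.sqrt_pos.2 hM0
  have hρ1 : ρ < 1 := by
    rw [hρM]
    calc Real.sqrt M < Real.sqrt 1 := Real.sqrt_lt_sqrt hM0.le hM1
      _ = 1 := Real.sqrt_one
  refine ⟨⟨hρ0, hρ1⟩, ?_⟩
  -- geometric setup
  set a := J x - xbar with hadef
  set b := x - J x with hbdef
  set m := ‖a‖ with hmdef
  set n := ‖b‖ with hndef
  set t := ⟪a, b⟫ with htdef
  have h0A : (0 : H) ∈ A xbar := by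
    have hmem : xbar ∈ ({xbar} : Set H) := rfl
    rw [← hzer] at hmem
    exact hmem
  have ht0 : 0 ≤ t := by
    have hm := hmono (J x) xbar ((1 / γ) • (x - J x)) 0 (hJ x) h0A
    rw [sub_zero, real_inner_smul_right] at hm
    have hγinv : 0 < 1 / γ := by positivity
    nlinarith
  have htc : t ≤ m * n := real_inner_le_norm a b
  have hmn : m ≤ κ * n := by
    have hlip := hLip (J x) ((1 / γ) • (x - J x)) (hJ x) hx
    have hnorm : ‖(1 / γ) • (x - J x)‖ = (1 / γ) * n := by
      rw [norm_smul, Real.norm_eq_abs, abs_of_pos (by positivity : (0:ℝ) < 1 / γ)]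
    rw [hnorm] at hlip
    calc m ≤ α * ((1 / γ) * n) := hlip
      _ = κ * n := by rw [hκdef]; ring
  have hxx : x - xbar = a + b := by rw [hadef, hbdef]; abel
  have hyy : y - xbar = a + (1 - lam) • b := by
    rw [hy, hadef, hbdef]
    have : (1 - lam) • x + lam • J x - xbar
        = (J x - xbar) + ((1 - lam) • x - (1 - lam) • J x) := by
      rw [sub_smul, sub_smul, one_smul, one_smul]; abel
    rw [this, smul_sub]
  have hD : ‖x - xbar‖ ^ 2 = m ^ 2 + 2 * t + n ^ 2 := by
    rw [hxx, @norm_add_sq_real]; try ring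
  have hf : ‖y - xbar‖ ^ 2 = m ^ 2 + 2 * (1 - lam) * t + (1 - lam) ^ 2 * n ^ 2 := by
    rw [hyy, @norm_add_sq_real, real_inner_smul_right, norm_smul, Real.norm_eq_abs,
      mul_pow, sq_abs]
    try ring
  have hsq : ρ ^ 2 = M := by rw [hρM]; exact Real.sq_sqrt hM0.le
  have hmain : ‖y - xbar‖ ^ 2 ≤ ρ ^ 2 * ‖x - xbar‖ ^ 2 := by
    rw [hsq, hf, hD, hMdef]
    exact key_scalar κ lam m n t hκpos hl1 hl2 (norm_nonneg _) (norm_nonneg _) hmn ht0 htc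
  calc ‖y - xbar‖ = Real.sqrt (‖y - xbar‖ ^ 2) := (Real.sqrt_sq (norm_nonneg _)).symm
    _ ≤ Real.sqrt ((ρ * ‖x - xbar‖) ^ 2) := Real.sqrt_le_sqrt (by rw [mul_pow]; exact hmain)
    _ = ρ * ‖x - xbar‖ := Real.sqrt_sq (mul_nonneg hρ0.le (norm_nonneg _))
end

section
/- Let H be a real Hilbert space. For each k ∈ ℕ let α_k ∈ (0,1], let T_k : H → H be α_k-averaged, let λ_k ∈ [0, 1/α_k], let η_k ≥ 0, and let e_k ∈ H. Assume C := ⋂_{k∈ℕ} Fix T_k is nonempty. Let x_0 ∈ H and define recursively x_{k+1} := (1−λ_k)x_k + λ_k·(T_k x_k) + η_k·e_k, and set y_k := (1−λ_k)x_k + λ_k·(T_k x_k). Then for every k ∈ ℕ and every p ∈ C with ‖x_k − p‖ = infDist(x_k, C): (infDist(x_{k+1}, C))² ≤ (infDist(x_k, C))² − λ_k·(1/α_k − λ_k)·‖x_k − T_k x_k‖² + η_k·‖e_k‖·(2·‖y_k − p‖ + η_k·‖e_k‖). -/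
/-!
Write the averaged operator as `T = (1 - α) Id + α R`. The relaxed step is then the convex
combination `y - p = (1 - μ) (x - p) + μ (R x - p)` with `μ = λ α ∈ [0, 1]`, and the Hilbert-space
identity for the norm of a convex combination, together with `‖R x - p‖ ≤ ‖x - p‖`, gives
`‖y - p‖² ≤ ‖x - p‖² - μ (1 - μ) ‖x - R x‖²`, which is the claimed descent since
`x - T x = α (x - R x)`. The error term only moves `y` by `η e`, which costs the stated amount
through the triangle inequality `d(y + η e, C) ≤ ‖y - p‖ + η ‖e‖`.
-/

open Function Metric

section InnerProductSpace

variable {H : Type*} [NormedAddCommGroup H] [InnerProductSpace ℝ H]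

theorem norm_one_sub_smul_add_smul_sq (a b : H) (μ : ℝ) :
    ‖(1 - μ) • a + μ • b‖ ^ 2 = (1 - μ) * ‖a‖ ^ 2 + μ * ‖b‖ ^ 2 - μ * (1 - μ) * ‖a - b‖ ^ 2 := by
  rw [norm_add_sq_real, norm_sub_sq_real, norm_smul, norm_smul, real_inner_smul_left,
    real_inner_smul_right, mul_pow, mul_pow, Real.norm_eq_abs, Real.norm_eq_abs, sq_abs, sq_abs]
  ring

variable {α : ℝ} {T R : H → H} {p : H}

theorem Function.IsFixedPt.of_averaged (hα : α ≠ 0) (hTR : ∀ a, T a = (1 - α) • a + α • R a)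
    (hp : IsFixedPt T p) : IsFixedPt R p := by
  have h : α • (R p - p) = 0 := by
    have := hTR p
    rw [hp.eq] at this
    linear_combination (norm := module) -this
  exact sub_eq_zero.mp ((smul_eq_zero.mp h).resolve_left hα)

theorem norm_relaxed_averaged_sub_sq_le (hα : 0 < α) (hR : ∀ a b, ‖R a - R b‖ ≤ ‖a - b‖)
    (hTR : ∀ a, T a = (1 - α) • a + α • R a) (hp : IsFixedPt T p) {lam : ℝ} (hlam₀ : 0 ≤ lam)
    (hlam₁ : lam ≤ 1 / α) (x : H) :
    ‖(1 - lam) • x + lam • T x - p‖ ^ 2 ≤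
      ‖x - p‖ ^ 2 - lam * (1 / α - lam) * ‖x - T x‖ ^ 2 := by
  set μ := lam * α with hμ
  have hμ₀ : 0 ≤ μ := mul_nonneg hlam₀ hα.le
  have hμ₁ : μ ≤ 1 := by rwa [le_div_iff₀ hα] at hlam₁
  have hRx : ‖R x - p‖ ≤ ‖x - p‖ := by
    simpa only [(hp.of_averaged hα.ne' hTR).eq] using hR x p
  have hstep : (1 - lam) • x + lam • T x - p = (1 - μ) • (x - p) + μ • (R x - p) := by
    rw [hTR, hμ]; module
  have hres : x - T x = α • (x - R x) := by rw [hTR]; module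
  have hcoef : lam * (1 / α - lam) * α ^ 2 = μ * (1 - μ) := by field_simp; ring
  rw [hstep, norm_one_sub_smul_add_smul_sq, sub_sub_sub_cancel_right, hres, norm_smul,
    Real.norm_of_nonneg hα.le, mul_pow, ← mul_assoc, hcoef]
  have : μ * ‖R x - p‖ ^ 2 ≤ μ * ‖x - p‖ ^ 2 := by gcongr
  linarith

end InnerProductSpace

theorem Metric.infDist_add_sq_le {E : Type*} [SeminormedAddCommGroup E] {C : Set E} {p : E}
    (hp : p ∈ C) (y v : E) :
    infDist (y + v) C ^ 2 ≤ ‖y - p‖ ^ 2 + ‖v‖ * (2 * ‖y - p‖ + ‖v‖) := by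
  have h : infDist (y + v) C ≤ ‖y - p‖ + ‖v‖ :=
    calc infDist (y + v) C ≤ ‖y - p + v‖ := by
          simpa only [dist_eq_norm, add_sub_right_comm] using infDist_le_dist_of_mem (x := y + v) hp
      _ ≤ ‖y - p‖ + ‖v‖ := norm_add_le _ _
  calc infDist (y + v) C ^ 2 ≤ (‖y - p‖ + ‖v‖) ^ 2 := by gcongr; exact infDist_nonneg
    _ = ‖y - p‖ ^ 2 + ‖v‖ * (2 * ‖y - p‖ + ‖v‖) := by ring

theorem stmt_14_general {H : Type*} [NormedAddCommGroup H] [InnerProductSpace ℝ H]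
    (α : ℕ → ℝ) (hα : ∀ k, α k ∈ Set.Ioc (0 : ℝ) 1)
    (T : ℕ → H → H)
    (hT : ∀ k, ∃ R : H → H, (∀ a b : H, ‖R a - R b‖ ≤ ‖a - b‖) ∧
      ∀ a : H, T k a = (1 - α k) • a + α k • R a)
    (lam η : ℕ → ℝ)
    (hlam : ∀ k, lam k ∈ Set.Icc (0 : ℝ) (1 / α k))
    (hη : ∀ k, 0 ≤ η k)
    (e : ℕ → H)
    (C : Set H) (hC : C = ⋂ k, {w : H | T k w = w})
    (x : ℕ → H)
    (hx : ∀ k, x (k + 1) = (1 - lam k) • x k + lam k • T k (x k) + η k • e k)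
    (y : ℕ → H)
    (hy : ∀ k, y k = (1 - lam k) • x k + lam k • T k (x k)) :
    ∀ k, ∀ p ∈ C, ‖x k - p‖ = Metric.infDist (x k) C →
      (Metric.infDist (x (k + 1)) C) ^ 2 ≤
        (Metric.infDist (x k) C) ^ 2
          - lam k * (1 / α k - lam k) * ‖x k - T k (x k)‖ ^ 2
          + η k * ‖e k‖ * (2 * ‖y k - p‖ + η k * ‖e k‖) := by
  intro k p hp hnear
  obtain ⟨R, hR, hTR⟩ := hT k
  have hpT : IsFixedPt (T k) p := by
    rw [hC] at hp
    exact Set.mem_iInter.mp hp k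
  have hdescent := norm_relaxed_averaged_sub_sq_le (hα k).1 hR hTR hpT (hlam k).1 (hlam k).2 (x k)
  have hperturb := infDist_add_sq_le hp (y k) (η k • e k)
  rw [← hy k] at hdescent
  rw [hx k, ← hy k, ← hnear]
  rw [norm_smul, Real.norm_of_nonneg (hη k)] at hperturb
  linarith

/-- Inexact non-stationary Krasnosel'skiĭ–Mann iterations: for `α_k`-averaged
operators `T_k` with common fixed point set intersection `C` nonempty,
`λ_k ∈ [0, 1/α_k]`, `η_k ≥ 0`, and `x_{k+1} = (1-λ_k)x_k + λ_k T_k x_k + η_k e_k`,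
for every `k` and every nearest point `p` of `x_k` in `C`,
`d(x_{k+1},C)² ≤ d(x_k,C)² - λ_k(1/α_k - λ_k)‖x_k - T_k x_k‖²
  + η_k‖e_k‖(2‖y_k - p‖ + η_k‖e_k‖)` where `y_k := (1-λ_k)x_k + λ_k T_k x_k`. -/
theorem stmt_14 {H : Type*} [NormedAddCommGroup H] [InnerProductSpace ℝ H] [CompleteSpace H]
    (α : ℕ → ℝ) (hα : ∀ k, α k ∈ Set.Ioc (0 : ℝ) 1)
    (T : ℕ → H → H)
    (hT : ∀ k, ∃ R : H → H, (∀ a b : H, ‖R a - R b‖ ≤ ‖a - b‖) ∧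
      ∀ a : H, T k a = (1 - α k) • a + α k • R a)
    (lam η : ℕ → ℝ)
    (hlam : ∀ k, lam k ∈ Set.Icc (0 : ℝ) (1 / α k))
    (hη : ∀ k, 0 ≤ η k)
    (e : ℕ → H)
    (C : Set H) (hC : C = ⋂ k, {w : H | T k w = w}) (hCne : C.Nonempty)
    (x : ℕ → H)
    (hx : ∀ k, x (k + 1) = (1 - lam k) • x k + lam k • T k (x k) + η k • e k)
    (y : ℕ → H)
    (hy : ∀ k, y k = (1 - lam k) • x k + lam k • T k (x k)) :
    ∀ k, ∀ p ∈ C, ‖x k - p‖ = Metric.infDist (x k) C →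
      (Metric.infDist (x (k + 1)) C) ^ 2 ≤
        (Metric.infDist (x k) C) ^ 2
          - lam k * (1 / α k - lam k) * ‖x k - T k (x k)‖ ^ 2
          + η k * ‖e k‖ * (2 * ‖y k - p‖ + η k * ‖e k‖) :=
  stmt_14_general α hα T hT lam η hlam hη e C hC x hx y hy
end

section
/- Let H be a real Hilbert space. For each k ∈ ℕ let α_k ∈ (0,1], let T_k : H → H be α_k-averaged, let λ_k ∈ [0, 1/α_k], let η_k ≥ 0, and let e_k ∈ H. Assume there is a nonempty set C ⊆ H with Fix T_k = C for every k, and let x̄ ∈ C. Assume each Id − T_k is metrically subregular at x̄ for 0 with a common radius: there exist γ_k > 0 (k ∈ ℕ) and δ > 0 such that for every k and every x with ‖x − x̄‖ ≤ δ, infDist(x, C) ≤ γ_k·‖x − T_k x‖. Assume the series ∑_{k∈ℕ} η_k·‖e_k‖ converges with sum s < δ, and let x_0 ∈ H with ‖x_0 − x̄‖ ≤ δ − s. Define recursively x_{k+1} := (1−λ_k)x_k + λ_k·(T_k x_k) + η_k·e_k, set y_k := (1−λ_k)x_k + λ_k·(T_k x_k) and β_k := λ_k·(1/α_k − λ_k)/γ_k².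 Then for every k ∈ ℕ and every p ∈ C with ‖x_k − p‖ = infDist(x_k, C): (infDist(x_{k+1}, C))² ≤ (1 − β_k)·(infDist(x_k, C))² + η_k·‖e_k‖·(2·‖y_k − p‖ + η_k·‖e_k‖). -/
lemma combo_sq {H : Type*} [NormedAddCommGroup H] [InnerProductSpace ℝ H]
    (t : ℝ) (a b : H) :
    ‖(1 - t) • a + t • b‖ ^ 2
      = (1 - t) * ‖a‖ ^ 2 + t * ‖b‖ ^ 2 - t * (1 - t) * ‖a - b‖ ^ 2 := by
  rw [← real_inner_self_eq_norm_sq, ← real_inner_self_eq_norm_sq a,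
    ← real_inner_self_eq_norm_sq b, ← real_inner_self_eq_norm_sq (a - b)]
  simp only [inner_add_left, inner_add_right, inner_sub_left, inner_sub_right,
    inner_smul_left, inner_smul_right, RCLike.conj_to_real, real_inner_comm a b]
  ring

set_option maxHeartbeats 800000 in
/-- Under the Krasnosel'skiĭ–Mann setting with `Fix T_k = C` for all `k`,
`x̄ ∈ C`, metric subregularity of `Id - T_k` at `x̄` for `0` with constants `γ_k > 0` and
a common radius `δ > 0`, summable errors `∑ η_k‖e_k‖ = s < δ`, and
`‖x_0 - x̄‖ ≤ δ - s`, the iteration `x_{k+1} = (1-λ_k)x_k + λ_k T_k x_k + η_k e_k`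
satisfies, with `β_k := λ_k(1/α_k - λ_k)/γ_k²`, for every nearest point `p` of `x_k` in
`C`: `d(x_{k+1},C)² ≤ (1-β_k)d(x_k,C)² + η_k‖e_k‖(2‖y_k - p‖ + η_k‖e_k‖)`. -/
theorem stmt_15 {H : Type*} [NormedAddCommGroup H] [InnerProductSpace ℝ H] [CompleteSpace H]
    (α : ℕ → ℝ) (hα : ∀ k, α k ∈ Set.Ioc (0 : ℝ) 1)
    (T : ℕ → H → H)
    (hT : ∀ k, ∃ R : H → H, (∀ a b : H, ‖R a - R b‖ ≤ ‖a - b‖) ∧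
      ∀ a : H, T k a = (1 - α k) • a + α k • R a)
    (lam η : ℕ → ℝ)
    (hlam : ∀ k, lam k ∈ Set.Icc (0 : ℝ) (1 / α k))
    (hη : ∀ k, 0 ≤ η k)
    (e : ℕ → H)
    (C : Set H) (hCne : C.Nonempty) (hC : ∀ k, {w : H | T k w = w} = C)
    (xbar : H) (hxbar : xbar ∈ C)
    (γ : ℕ → ℝ) (hγ : ∀ k, 0 < γ k) (δ : ℝ) (hδ : 0 < δ)
    (hsub : ∀ k, ∀ w : H, ‖w - xbar‖ ≤ δ → Metric.infDist w C ≤ γ k * ‖w - T k w‖)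
    (s : ℝ) (hs : HasSum (fun k => η k * ‖e k‖) s) (hsδ : s < δ)
    (x : ℕ → H) (hx0 : ‖x 0 - xbar‖ ≤ δ - s)
    (hx : ∀ k, x (k + 1) = (1 - lam k) • x k + lam k • T k (x k) + η k • e k)
    (y : ℕ → H)
    (hy : ∀ k, y k = (1 - lam k) • x k + lam k • T k (x k))
    (β : ℕ → ℝ)
    (hβ : ∀ k, β k = lam k * (1 / α k - lam k) / (γ k) ^ 2) :
    ∀ k, ∀ p ∈ C, ‖x k - p‖ = Metric.infDist (x k) C →
      (Metric.infDist (x (k + 1)) C) ^ 2 ≤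
        (1 - β k) * (Metric.infDist (x k) C) ^ 2
          + η k * ‖e k‖ * (2 * ‖y k - p‖ + η k * ‖e k‖) := by
  choose R hRne hRdef using hT
  have hfixT : ∀ k, ∀ p ∈ C, T k p = p := by
    intro k p hp
    have : p ∈ {w : H | T k w = w} := by rw [hC k]; exact hp
    exact this
  have hfixR : ∀ k, ∀ p ∈ C, R k p = p := by
    intro k p hp
    have h1 := hfixT k p hp
    rw [hRdef k p] at h1
    have h2 : α k • R k p = α k • p := by
      have : (1 - α k) • p + α k • R k p = (1 - α k) • p + α k • p := by
        rw [h1]; module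
      exact add_left_cancel this
    exact smul_right_injective H (ne_of_gt (hα k).1) h2
  -- t_k := lam k * α k ∈ [0,1]
  have ht0 : ∀ k, 0 ≤ lam k * α k := fun k =>
    mul_nonneg (hlam k).1 (le_of_lt (hα k).1)
  have ht1 : ∀ k, lam k * α k ≤ 1 := by
    intro k
    have := mul_le_mul_of_nonneg_right (hlam k).2 (le_of_lt (hα k).1)
    rwa [one_div, inv_mul_cancel₀ (ne_of_gt (hα k).1)] at this
  have hyt : ∀ k, y k = (1 - lam k * α k) • x k + (lam k * α k) • R k (x k) := by
    intro k; rw [hy k, hRdef k]; module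
  -- y_k doesn't increase distance to any point of C
  have hynon : ∀ k, ∀ q ∈ C, ‖y k - q‖ ≤ ‖x k - q‖ := by
    intro k q hq
    have hqy : y k - q = (1 - lam k * α k) • (x k - q) + (lam k * α k) • (R k (x k) - q) := by
      rw [hyt k]; module
    have hR : ‖R k (x k) - q‖ ≤ ‖x k - q‖ := by
      simpa [hfixR k q hq] using hRne k (x k) q
    calc ‖y k - q‖ ≤ ‖(1 - lam k * α k) • (x k - q)‖ + ‖(lam k * α k) • (R k (x k) - q)‖ := by
          rw [hqy]; exact norm_add_le _ _
      _ = (1 - lam k * α k) * ‖x k - q‖ + (lam k * α k) * ‖R k (x k) - q‖ := by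
          rw [norm_smul, norm_smul, Real.norm_eq_abs, Real.norm_eq_abs,
            abs_of_nonneg (by linarith [ht1 k]), abs_of_nonneg (ht0 k)]
      _ ≤ (1 - lam k * α k) * ‖x k - q‖ + (lam k * α k) * ‖x k - q‖ := by
          have := mul_le_mul_of_nonneg_left hR (ht0 k)
          linarith
      _ = ‖x k - q‖ := by ring
  -- iterates stay in the δ-ball
  have hps : ∀ n, ∑ j ∈ Finset.range n, η j * ‖e j‖ ≤ s := fun n =>
    sum_le_hasSum _ (fun j _ => mul_nonneg (hη j) (norm_nonneg _)) hs
  have hbound : ∀ k, ‖x k - xbar‖ ≤ δ := by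
    have key : ∀ k, ‖x k - xbar‖ ≤ (δ - s) + ∑ j ∈ Finset.range k, η j * ‖e j‖ := by
      intro k
      induction k with
      | zero => simpa using hx0
      | succ n ih =>
        have hstep : x (n + 1) - xbar = (y n - xbar) + η n • e n := by
          rw [hx n, hy n]; abel
        have : ‖x (n + 1) - xbar‖ ≤ ‖y n - xbar‖ + η n * ‖e n‖ := by
          rw [hstep]
          calc ‖(y n - xbar) + η n • e n‖ ≤ ‖y n - xbar‖ + ‖η n • e n‖ := norm_add_le _ _
            _ = ‖y n - xbar‖ + η n * ‖e n‖ := by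
                rw [norm_smul, Real.norm_eq_abs, abs_of_nonneg (hη n)]
        have h2 := hynon n xbar hxbar
        rw [Finset.sum_range_succ]
        linarith
    intro k
    have := key k
    have := hps k
    linarith
  -- main estimate
  intro k p hp hnear
  set d := Metric.infDist (x k) C with hd
  have hd0 : 0 ≤ d := Metric.infDist_nonneg
  have hfRp := hfixR k p hp
  -- ‖y k - p‖² ≤ ‖x k - p‖² - t(1-t)‖x k - R k (x k)‖²
  set t := lam k * α k with htdef
  have hqy : y k - p = (1 - t) • (x k - p) + t • (R k (x k) - p) := by
    rw [hyt k]; module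
  have hcombo := combo_sq t (x k - p) (R k (x k) - p)
  have hab : (x k - p) - (R k (x k) - p) = x k - R k (x k) := by abel
  rw [hab] at hcombo
  have hRle : ‖R k (x k) - p‖ ≤ ‖x k - p‖ := by
    simpa [hfRp] using hRne k (x k) p
  have hRle2 : ‖R k (x k) - p‖ ^ 2 ≤ ‖x k - p‖ ^ 2 := by
    nlinarith [norm_nonneg (R k (x k) - p), norm_nonneg (x k - p)]
  have hyp2 : ‖y k - p‖ ^ 2 ≤ ‖x k - p‖ ^ 2 - t * (1 - t) * ‖x k - R k (x k)‖ ^ 2 := by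
    rw [hqy, hcombo]
    nlinarith [mul_le_mul_of_nonneg_left hRle2 (ht0 k)]
  -- relate ‖x - Tx‖ and ‖x - Rx‖
  have hTx : x k - T k (x k) = α k • (x k - R k (x k)) := by
    rw [hRdef k]; module
  have hTxn : ‖x k - T k (x k)‖ = α k * ‖x k - R k (x k)‖ := by
    rw [hTx, norm_smul, Real.norm_eq_abs, abs_of_pos (hα k).1]
  -- metric subregularity
  have hsubk : d ≤ γ k * ‖x k - T k (x k)‖ := hsub k (x k) (hbound k)
  have hdsq : d ^ 2 ≤ (γ k) ^ 2 * ‖x k - T k (x k)‖ ^ 2 := by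
    nlinarith [norm_nonneg (x k - T k (x k)), hγ k]
  have hll : 0 ≤ lam k * (1 / α k - lam k) :=
    mul_nonneg (hlam k).1 (by linarith [(hlam k).2])
  have hβd : β k * d ^ 2 ≤ lam k * (1 / α k - lam k) * ‖x k - T k (x k)‖ ^ 2 := by
    rw [hβ k, div_mul_eq_mul_div, div_le_iff₀ (pow_pos (hγ k) 2)]
    nlinarith [mul_le_mul_of_nonneg_left hdsq hll]
  -- t(1-t)‖x-Rx‖² = lam(1/α - lam)‖x-Tx‖²
  have hteq : lam k * (1 / α k - lam k) * ‖x k - T k (x k)‖ ^ 2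
      = t * (1 - t) * ‖x k - R k (x k)‖ ^ 2 := by
    rw [hTxn, htdef]
    have hane : α k ≠ 0 := ne_of_gt (hα k).1
    field_simp
  -- final chain
  have h1 : Metric.infDist (x (k + 1)) C ≤ ‖y k - p‖ + η k * ‖e k‖ := by
    have h11 : Metric.infDist (x (k + 1)) C ≤ ‖x (k + 1) - p‖ := by
      rw [← dist_eq_norm]; exact Metric.infDist_le_dist_of_mem hp
    have hstep : x (k + 1) - p = (y k - p) + η k • e k := by
      rw [hx k, hy k]; abel
    calc Metric.infDist (x (k + 1)) C ≤ ‖x (k + 1) - p‖ := h11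
      _ ≤ ‖y k - p‖ + η k * ‖e k‖ := by
          rw [hstep]
          calc ‖(y k - p) + η k • e k‖ ≤ ‖y k - p‖ + ‖η k • e k‖ := norm_add_le _ _
            _ = ‖y k - p‖ + η k * ‖e k‖ := by
                rw [norm_smul, Real.norm_eq_abs, abs_of_nonneg (hη k)]
  have h2 : (Metric.infDist (x (k + 1)) C) ^ 2 ≤ (‖y k - p‖ + η k * ‖e k‖) ^ 2 :=
    pow_le_pow_left₀ Metric.infDist_nonneg h1 2
  have hxpd : ‖x k - p‖ = d := hnear
  have h3 : (‖y k - p‖ + η k * ‖e k‖) ^ 2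
      = ‖y k - p‖ ^ 2 + η k * ‖e k‖ * (2 * ‖y k - p‖ + η k * ‖e k‖) := by ring
  have h4 : ‖y k - p‖ ^ 2 ≤ (1 - β k) * d ^ 2 := by
    rw [← hteq] at hyp2
    rw [hxpd] at hyp2
    linarith
  calc (Metric.infDist (x (k + 1)) C) ^ 2 ≤ (‖y k - p‖ + η k * ‖e k‖) ^ 2 := h2
    _ = ‖y k - p‖ ^ 2 + η k * ‖e k‖ * (2 * ‖y k - p‖ + η k * ‖e k‖) := h3
    _ ≤ (1 - β k) * d ^ 2 + η k * ‖e k‖ * (2 * ‖y k - p‖ + η k * ‖e k‖) := by linarith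
end

section
/- Let H be a real Hilbert space. For each k ∈ ℕ let α_k ∈ (0,1], let T_k : H → H be α_k-averaged, and let λ_k ∈ [0, 1/α_k]. Assume there is a nonempty set C ⊆ H with Fix T_k = C for every k, and let x̄ ∈ C. Assume there exist γ_k > 0 (k ∈ ℕ) and δ > 0 such that for every k and every x with ‖x − x̄‖ ≤ δ, infDist(x, C) ≤ γ_k·‖x − T_k x‖, and suppose sup_k γ_k < ∞. Suppose 0 < inf_k λ_k, sup_k λ_k < 1/α where α := sup_k α_k, and let x_0 ∈ H with ‖x_0 − x̄‖ ≤ δ. Define recursively x_{k+1} := (1−λ_k)x_k + λ_k·(T_k x_k), and set ρ := sup_k (1 − λ_k·(1/α_k − λ_k)/γ_k²). Then ρ < 1 and there exists x̂ ∈ C such that ‖x_k − x̂‖ ≤ 2·ρ^{k/2}·infDist(x_0, C) for all k ∈ ℕ; in particular (x_k) converges R-linearly to x̂ ∈ C. -/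
open Metric Filter

section Aux
variable {H : Type*} [NormedAddCommGroup H] [InnerProductSpace ℝ H]

lemma combo_norm_sq' (a b : H) (t : ℝ) :
    ‖(1 - t) • a + t • b‖ ^ 2
      = (1 - t) * ‖a‖ ^ 2 + t * ‖b‖ ^ 2 - t * (1 - t) * ‖a - b‖ ^ 2 := by
  have h1 := norm_add_sq_real ((1 - t) • a) (t • b)
  have h2 := norm_sub_sq_real a b
  rw [real_inner_smul_left, real_inner_smul_right, norm_smul, norm_smul] at h1
  simp only [Real.norm_eq_abs, mul_pow, sq_abs] at h1
  nlinarith [h1, h2]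

lemma km_step' (a lam : ℝ) (ha0 : 0 < a) (hlam0 : 0 ≤ lam)
    (R : H → H) (hR : ∀ u v : H, ‖R u - R v‖ ≤ ‖u - v‖)
    (x z : H) (hz : R z = z) :
    ‖((1 - lam) • x + lam • ((1 - a) • x + a • R x)) - z‖ ^ 2
      ≤ ‖x - z‖ ^ 2 - lam * (1 / a - lam) * ‖x - ((1 - a) • x + a • R x)‖ ^ 2 := by
  set μ := lam * a with hμ
  have hveq : ((1 - lam) • x + lam • ((1 - a) • x + a • R x)) - z
      = (1 - μ) • (x - z) + μ • (R x - z) := by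
    rw [hμ]; module
  have hw : x - ((1 - a) • x + a • R x) = a • (x - R x) := by module
  have hnw : ‖x - ((1 - a) • x + a • R x)‖ ^ 2 = a ^ 2 * ‖x - R x‖ ^ 2 := by
    rw [hw, norm_smul, Real.norm_eq_abs, mul_pow, sq_abs]
  have hμ0 : 0 ≤ μ := mul_nonneg hlam0 ha0.le
  have hv : ‖R x - z‖ ≤ ‖x - z‖ := by
    have := hR x z; rwa [hz] at this
  have hdiff : (x - z) - (R x - z) = x - R x := by abel
  have hkey : ‖(1 - μ) • (x - z) + μ • (R x - z)‖ ^ 2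
      = (1 - μ) * ‖x - z‖ ^ 2 + μ * ‖R x - z‖ ^ 2 - μ * (1 - μ) * ‖x - R x‖ ^ 2 := by
    rw [combo_norm_sq', hdiff]
  rw [hveq, hkey, hnw]
  have hcoef : lam * (1 / a - lam) * (a ^ 2 * ‖x - R x‖ ^ 2) = μ * (1 - μ) * ‖x - R x‖ ^ 2 := by
    field_simp [hμ]; ring
  rw [hcoef]
  nlinarith [norm_nonneg (R x - z), norm_nonneg (x - z),
    mul_le_mul_of_nonneg_left (mul_le_mul hv hv (norm_nonneg _) (norm_nonneg _)) hμ0]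

lemma sq_le_sq_of_norm {a b : ℝ} (ha : 0 ≤ a) (hb : 0 ≤ b) (h : a ^ 2 ≤ b ^ 2) : a ≤ b :=
  (pow_le_pow_iff_left₀ ha hb (by norm_num)).1 h

end Aux

/-- Under the exact Krasnosel'skiĭ–Mann setting with `Fix T_k = C` for all
`k`, `x̄ ∈ C`, metric subregularity constants `γ_k > 0` (uniformly bounded) with a common
radius `δ > 0`, `0 < inf_k λ_k` and `sup_k λ_k < 1/(sup_k α_k)`, and `‖x_0 - x̄‖ ≤ δ`,
the iteration `x_{k+1} = (1-λ_k)x_k + λ_k T_k x_k` satisfies: with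
`ρ := sup_k (1 - λ_k(1/α_k - λ_k)/γ_k²)` one has `ρ < 1` and there exists `x̂ ∈ C` with
`‖x_k - x̂‖ ≤ 2ρ^{k/2}·d(x_0,C)` for all `k`; in particular `x_k → x̂` (R-linearly). -/
theorem stmt_16 {H : Type*} [NormedAddCommGroup H] [InnerProductSpace ℝ H] [CompleteSpace H]
    (α : ℕ → ℝ) (hα : ∀ k, α k ∈ Set.Ioc (0 : ℝ) 1)
    (T : ℕ → H → H)
    (hT : ∀ k, ∃ R : H → H, (∀ a b : H, ‖R a - R b‖ ≤ ‖a - b‖) ∧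
      ∀ a : H, T k a = (1 - α k) • a + α k • R a)
    (lam : ℕ → ℝ)
    (hlam : ∀ k, lam k ∈ Set.Icc (0 : ℝ) (1 / α k))
    (C : Set H) (hCne : C.Nonempty) (hC : ∀ k, {w : H | T k w = w} = C)
    (xbar : H) (hxbar : xbar ∈ C)
    (γ : ℕ → ℝ) (hγ : ∀ k, 0 < γ k) (δ : ℝ) (hδ : 0 < δ)
    (hsub : ∀ k, ∀ w : H, ‖w - xbar‖ ≤ δ → Metric.infDist w C ≤ γ k * ‖w - T k w‖)
    (hγbdd : BddAbove (Set.range γ))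
    (hlaminf : 0 < ⨅ k, lam k)
    (hlamsup : ∃ b : ℝ, (∀ k, lam k ≤ b) ∧ b < 1 / (⨆ k, α k))
    (x : ℕ → H) (hx0 : ‖x 0 - xbar‖ ≤ δ)
    (hx : ∀ k, x (k + 1) = (1 - lam k) • x k + lam k • T k (x k))
    (ρ : ℝ) (hρ : ρ = ⨆ k, (1 - lam k * (1 / α k - lam k) / (γ k) ^ 2)) :
    ρ < 1 ∧ ∃ xhat ∈ C,
      (∀ k : ℕ, ‖x k - xhat‖ ≤ 2 * ρ ^ ((k : ℝ) / 2) * Metric.infDist (x 0) C) ∧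
      Filter.Tendsto x Filter.atTop (nhds xhat) := by
  classical
  -- choose the nonexpansive parts
  choose R hR hTR using hT
  -- basic parameter facts
  have hα0 : ∀ k, 0 < α k := fun k => (hα k).1
  have hαbdd : BddAbove (Set.range α) := ⟨1, by rintro _ ⟨k, rfl⟩; exact (hα k).2⟩
  set A := ⨆ k, α k with hA
  have hαA : ∀ k, α k ≤ A := fun k => le_ciSup hαbdd k
  have hA0 : 0 < A := lt_of_lt_of_le (hα0 0) (hαA 0)
  have hlam0 : ∀ k, 0 ≤ lam k := fun k => (hlam k).1
  have hlamub : ∀ k, lam k ≤ 1 / α k := fun k => (hlam k).2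
  set L := ⨅ k, lam k with hL
  have hLle : ∀ k, L ≤ lam k := fun k => ciInf_le ⟨0, by rintro _ ⟨k, rfl⟩; exact hlam0 k⟩ k
  obtain ⟨b, hb, hbA⟩ := hlamsup
  set G := ⨆ k, γ k with hG
  have hγG : ∀ k, γ k ≤ G := fun k => le_ciSup hγbdd k
  have hG0 : 0 < G := lt_of_lt_of_le (hγ 0) (hγG 0)
  have hinvA : ∀ k, 1 / A ≤ 1 / α k := fun k => one_div_le_one_div_of_le (hα0 k) (hαA k)
  have hAb0 : 0 < 1 / A - b := sub_pos.2 hbA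
  set c := L * (1 / A - b) / G ^ 2 with hc
  have hc0 : 0 < c := div_pos (mul_pos hlaminf hAb0) (pow_pos hG0 2)
  have hcle : ∀ k, c ≤ lam k * (1 / α k - lam k) / γ k ^ 2 := by
    intro k
    apply div_le_div₀ (mul_nonneg (le_trans hlaminf.le (hLle k)) (by linarith [hinvA k, hb k]))
      (mul_le_mul (hLle k) (by linarith [hinvA k, hb k]) hAb0.le (hlam0 k))
      (pow_pos (hγ k) 2) (pow_le_pow_left₀ (hγ k).le (hγG k) 2)
  have hterm_nonneg : ∀ k, 0 ≤ lam k * (1 / α k - lam k) / γ k ^ 2 := fun k =>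
    div_nonneg (mul_nonneg (hlam0 k) (by linarith [hlamub k])) (sq_nonneg _)
  have hbddρ : BddAbove (Set.range fun k => 1 - lam k * (1 / α k - lam k) / (γ k) ^ 2) :=
    ⟨1, by rintro _ ⟨k, rfl⟩; simp only; linarith [hterm_nonneg k]⟩
  have hρk : ∀ k, 1 - lam k * (1 / α k - lam k) / (γ k) ^ 2 ≤ ρ := by
    intro k; rw [hρ]; exact le_ciSup hbddρ k
  have hρlt1 : ρ < 1 := by
    rw [hρ]
    refine lt_of_le_of_lt (ciSup_le fun k => ?_) (show 1 - c < 1 by linarith)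
    linarith [hcle k]
  -- fixed points of R
  have hRz : ∀ k, ∀ z ∈ C, R k z = z := by
    intro k z hz
    have hTz : T k z = z := by rw [← hC k] at hz; exact hz
    rw [hTR k z] at hTz
    have h4 : (α k) • R k z = (α k) • z := by
      have h3 : (α k) • R k z = z - (1 - α k) • z := eq_sub_of_add_eq' hTz
      rw [h3]; module
    exact smul_right_injective H (ne_of_gt (hα0 k)) h4
  -- key one-step inequality
  have key : ∀ k, ∀ z ∈ C, ‖x (k + 1) - z‖ ^ 2
      ≤ ‖x k - z‖ ^ 2 - lam k * (1 / α k - lam k) * ‖x k - T k (x k)‖ ^ 2 := by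
    intro k z hz
    have := km_step' (α k) (lam k) (hα0 k) (hlam0 k) (R k) (hR k) (x k) z (hRz k z hz)
    rw [hx k, hTR k (x k)]
    exact this
  have hs_nonneg : ∀ k, 0 ≤ lam k * (1 / α k - lam k) :=
    fun k => mul_nonneg (hlam0 k) (by linarith [hlamub k])
  -- Fejér monotonicity
  have hfe : ∀ k, ∀ z ∈ C, ‖x (k + 1) - z‖ ≤ ‖x k - z‖ := by
    intro k z hz
    refine sq_le_sq_of_norm (norm_nonneg _) (norm_nonneg _) ?_
    have := key k z hz
    nlinarith [mul_nonneg (hs_nonneg k) (sq_nonneg ‖x k - T k (x k)‖)]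
  have hfe2 : ∀ z ∈ C, ∀ k m, k ≤ m → ‖x m - z‖ ≤ ‖x k - z‖ := by
    intro z hz k m hkm
    induction m, hkm using Nat.le_induction with
    | base => exact le_refl _
    | succ n hn ih => exact le_trans (hfe n z hz) ih
  -- stay in the ball
  have hball : ∀ k, ‖x k - xbar‖ ≤ δ := by
    intro k
    induction k with
    | zero => exact hx0
    | succ n ih => exact le_trans (hfe n xbar hxbar) ih
  -- C is closed
  have hRcont : Continuous (R 0) := by
    apply LipschitzWith.continuous (K := 1)
    intro u v
    simp only [edist_dist, dist_eq_norm]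
    rw [ENNReal.coe_one, one_mul]
    exact ENNReal.ofReal_le_ofReal (hR 0 u v)
  have hCclosed : IsClosed C := by
    rw [← hC 0]
    have hTcont : Continuous (T 0) := by
      have : T 0 = fun a => (1 - α 0) • a + (α 0) • R 0 a := funext (hTR 0)
      rw [this]
      exact (continuous_id.const_smul _).add (hRcont.const_smul _)
    exact isClosed_eq hTcont continuous_id
  set d : ℕ → ℝ := fun k => infDist (x k) C with hdipped
  have hd0 : ∀ k, 0 ≤ d k := fun k => infDist_nonneg
  -- contraction of infDist squared
  have hcontr : ∀ k, d (k + 1) ^ 2 ≤ ρ * d k ^ 2 := by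
    intro k
    have hsubk : d k ≤ γ k * ‖x k - T k (x k)‖ := hsub k (x k) (hball k)
    have hγk2 : (0:ℝ) < γ k ^ 2 := pow_pos (hγ k) 2
    have hTd : d k ^ 2 / γ k ^ 2 ≤ ‖x k - T k (x k)‖ ^ 2 := by
      rw [div_le_iff₀ hγk2]
      calc d k ^ 2 ≤ (γ k * ‖x k - T k (x k)‖) ^ 2 :=
            pow_le_pow_left₀ (hd0 k) hsubk 2
        _ = ‖x k - T k (x k)‖ ^ 2 * γ k ^ 2 := by ring
    -- main estimate with near-minimizers
    have hmain : d (k + 1) ^ 2 + lam k * (1 / α k - lam k) * (d k ^ 2 / γ k ^ 2) ≤ d k ^ 2 := by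
      by_contra hcon
      push_neg at hcon
      set c' := d (k + 1) ^ 2 + lam k * (1 / α k - lam k) * (d k ^ 2 / γ k ^ 2) with hc'
      clear_value c'
      have hc'0 : 0 ≤ c' := by
        rw [hc']
        have h := mul_nonneg (hs_nonneg k) (div_nonneg (sq_nonneg (d k)) hγk2.le)
        nlinarith [sq_nonneg (d (k + 1))]
      have hlt : d k < Real.sqrt c' := by
        have := Real.sqrt_lt_sqrt (sq_nonneg (d k)) hcon
        rwa [Real.sqrt_sq (hd0 k)] at this
      obtain ⟨z, hzC, hzd⟩ := (infDist_lt_iff hCne).1 hlt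
      have h1 : d (k + 1) ^ 2 ≤ ‖x (k + 1) - z‖ ^ 2 := by
        apply pow_le_pow_left₀ (hd0 _) _ 2
        rw [← dist_eq_norm]; exact infDist_le_dist_of_mem hzC
      have h2 := key k z hzC
      have h3 : lam k * (1 / α k - lam k) * (d k ^ 2 / γ k ^ 2)
          ≤ lam k * (1 / α k - lam k) * ‖x k - T k (x k)‖ ^ 2 :=
        mul_le_mul_of_nonneg_left hTd (hs_nonneg k)
      have h4 : ‖x k - z‖ ^ 2 < c' := by
        have : ‖x k - z‖ < Real.sqrt c' := by rwa [← dist_eq_norm]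
        calc ‖x k - z‖ ^ 2 < Real.sqrt c' ^ 2 :=
              pow_lt_pow_left₀ this (norm_nonneg _) (by norm_num)
          _ = c' := Real.sq_sqrt hc'0
      linarith [hc']
    have hid : d k ^ 2 - lam k * (1 / α k - lam k) * (d k ^ 2 / γ k ^ 2)
        = (1 - lam k * (1 / α k - lam k) / γ k ^ 2) * d k ^ 2 := by
      field_simp
    calc d (k + 1) ^ 2 ≤ (1 - lam k * (1 / α k - lam k) / γ k ^ 2) * d k ^ 2 := by
          rw [← hid]; linarith
      _ ≤ ρ * d k ^ 2 := mul_le_mul_of_nonneg_right (hρk k) (sq_nonneg _)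
  refine ⟨hρlt1, ?_⟩
  by_cases hd00 : d 0 = 0
  · -- trivial case: x 0 ∈ C and the sequence is constant
    have hx0C : x 0 ∈ C := (hCclosed.mem_iff_infDist_zero hCne).2 hd00
    have hconst : ∀ k, x k = x 0 := by
      intro k
      induction k with
      | zero => rfl
      | succ n ih =>
        have hfix : T n (x n) = x n := by
          have : x n ∈ {w : H | T n w = w} := by rw [hC n, ih]; exact hx0C
          exact this
        rw [hx n, hfix, ih]; module
    refine ⟨x 0, hx0C, ?_, ?_⟩
    · intro k
      rw [hconst k, sub_self, norm_zero]
      rw [show Metric.infDist (x 0) C = d 0 from rfl, hd00, mul_zero]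
    · have : x = fun _ => x 0 := funext hconst
      rw [this]; exact tendsto_const_nhds
  · have hd0pos : 0 < d 0 := lt_of_le_of_ne (hd0 0) (Ne.symm hd00)
    have hρ0 : 0 ≤ ρ := by
      by_contra h
      push_neg at h
      nlinarith [hcontr 0, sq_nonneg (d 1), pow_pos hd0pos 2]
    set r := Real.sqrt ρ with hr
    have hr0 : 0 ≤ r := Real.sqrt_nonneg ρ
    have hr1 : r < 1 := by
      rw [hr, show (1:ℝ) = Real.sqrt 1 by rw [Real.sqrt_one]]
      exact Real.sqrt_lt_sqrt hρ0 hρlt1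
    have hr2 : r ^ 2 = ρ := Real.sq_sqrt hρ0
    -- geometric decay of d
    have hdk : ∀ k, d k ≤ r ^ k * d 0 := by
      intro k
      induction k with
      | zero => simp
      | succ n ih =>
        refine sq_le_sq_of_norm (hd0 _) (mul_nonneg (pow_nonneg hr0 _) (hd0 0)) ?_
        calc d (n + 1) ^ 2 ≤ ρ * d n ^ 2 := hcontr n
          _ ≤ ρ * (r ^ n * d 0) ^ 2 := by
              apply mul_le_mul_of_nonneg_left _ hρ0
              exact pow_le_pow_left₀ (hd0 n) ih 2
          _ = (r ^ (n + 1) * d 0) ^ 2 := by rw [← hr2]; ring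
    -- distance between consecutive iterates
    have hstep : ∀ k, dist (x k) (x (k + 1)) ≤ 2 * d 0 * r ^ k := by
      intro k
      have hdd : dist (x k) (x (k + 1)) ≤ 2 * d k := by
        by_contra hcon
        push_neg at hcon
        have : d k < dist (x k) (x (k + 1)) / 2 := by linarith
        obtain ⟨z, hzC, hzd⟩ := (infDist_lt_iff hCne).1 this
        have h1 : dist (x (k + 1)) z ≤ dist (x k) z := by
          rw [dist_eq_norm, dist_eq_norm]; exact hfe k z hzC
        have h2 := dist_triangle (x k) z (x (k + 1))
        rw [dist_comm z (x (k + 1))] at h2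
        linarith
      calc dist (x k) (x (k + 1)) ≤ 2 * d k := hdd
        _ ≤ 2 * (r ^ k * d 0) := by linarith [hdk k]
        _ = 2 * d 0 * r ^ k := by ring
    have hcauchy : CauchySeq x := cauchySeq_of_le_geometric r (2 * d 0) hr1 hstep
    obtain ⟨xhat, hxhat⟩ := cauchySeq_tendsto_of_complete hcauchy
    -- xhat ∈ C
    have hdlim : Tendsto d atTop (nhds 0) :=
      squeeze_zero hd0 hdk (by
        simpa using (tendsto_pow_atTop_nhds_zero_of_lt_one hr0 hr1).mul_const (d 0))
    have hdlim2 : Tendsto d atTop (nhds (infDist xhat C)) :=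
      ((continuous_infDist_pt C).tendsto xhat).comp hxhat
    have hxhatC : xhat ∈ C :=
      (hCclosed.mem_iff_infDist_zero hCne).2 (tendsto_nhds_unique hdlim2 hdlim)
    refine ⟨xhat, hxhatC, ?_, hxhat⟩
    intro k
    -- ‖x k - xhat‖ ≤ 2 d k
    have hbound : ‖x k - xhat‖ ≤ 2 * d k := by
      refine le_of_forall_pos_le_add fun ε hε => ?_
      have : d k < d k + ε / 2 := by linarith
      obtain ⟨z, hzC, hzd⟩ := (infDist_lt_iff hCne).1 this
      have hlimz : Tendsto (fun m => ‖x m - z‖) atTop (nhds ‖xhat - z‖) :=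
        ((hxhat.sub tendsto_const_nhds).norm)
      have hev : ∀ᶠ m in atTop, ‖x m - z‖ ≤ ‖x k - z‖ :=
        eventually_atTop.2 ⟨k, fun m hm => hfe2 z hzC k m hm⟩
      have hxz : ‖xhat - z‖ ≤ ‖x k - z‖ := le_of_tendsto hlimz hev
      have htri : ‖x k - xhat‖ ≤ ‖x k - z‖ + ‖xhat - z‖ := by
        have := dist_triangle (x k) z xhat
        rw [dist_eq_norm, dist_eq_norm, dist_comm z xhat, dist_eq_norm] at this
        exact this
      rw [dist_eq_norm] at hzd
      linarith
    -- relate r^k to ρ^(k/2)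
    have hrpow : ρ ^ ((k : ℝ) / 2) = r ^ k := by
      rw [show ((k : ℝ) / 2) = (1 / 2) * (k : ℝ) by ring, Real.rpow_mul hρ0,
        ← Real.sqrt_eq_rpow, ← hr, Real.rpow_natCast]
    calc ‖x k - xhat‖ ≤ 2 * d k := hbound
      _ ≤ 2 * (r ^ k * d 0) := by linarith [hdk k]
      _ = 2 * ρ ^ ((k : ℝ) / 2) * d 0 := by rw [hrpow]; ring
end

section
/- Let H be a real Hilbert space and let A : H → Set H be maximally monotone with Z := {z ∈ H : 0 ∈ A z} nonempty. Let x̄ ∈ Z and assume the metric subregularity condition: there exist κ > 0 and δ > 0 such that for every w with ‖w − x̄‖ ≤ δ and every u ∈ A w, infDist(w, Z) ≤ κ·‖u‖. Let (c_k)_{k∈ℕ} be positive reals and for each k let J_k : H → H satisfy (1/c_k)·(w − J_k w) ∈ A(J_k w) for every w ∈ H (so J_k is the resolvent of c_k A). Let x_0 ∈ H with ‖x_0 − x̄‖ ≤ δ and define the exact proximal point iteration x_{k+1} := J_k x_k. Then for every k ∈ ℕ: infDist(x_{k+1}, Z) ≤ (1/√(1 + c_k²/κ²))·infDist(x_k,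 Z). -/
open scoped RealInnerProductSpace

/-- Let `A` be maximally monotone on a real Hilbert space with `Z := zer A`
nonempty, `x̄ ∈ Z`, and assume metric subregularity with constants `κ > 0`, `δ > 0`.
Let `c_k > 0`, let `J_k` be the resolvent of `c_k A`, `‖x_0 - x̄‖ ≤ δ`, and
`x_{k+1} := J_k x_k`.  Then for every `k`,
`d(x_{k+1}, Z) ≤ (1/√(1 + c_k²/κ²))·d(x_k, Z)`. -/
theorem stmt_17 {H : Type*} [NormedAddCommGroup H] [InnerProductSpace ℝ H] [CompleteSpace H]
    (A : H → Set H)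
    (hmono : ∀ x y u v : H, u ∈ A x → v ∈ A y → 0 ≤ ⟪x - y, u - v⟫)
    (hmax : ∀ x u : H, (∀ y v : H, v ∈ A y → 0 ≤ ⟪x - y, u - v⟫) → u ∈ A x)
    (Z : Set H) (hZ : Z = {z : H | (0 : H) ∈ A z}) (hZne : Z.Nonempty)
    (xbar : H) (hxbar : xbar ∈ Z)
    (κ δ : ℝ) (hκ : 0 < κ) (hδ : 0 < δ)
    (hsub : ∀ w : H, ‖w - xbar‖ ≤ δ → ∀ u ∈ A w, Metric.infDist w Z ≤ κ * ‖u‖)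
    (c : ℕ → ℝ) (hc : ∀ k, 0 < c k)
    (J : ℕ → H → H) (hJ : ∀ k, ∀ w : H, (1 / c k) • (w - J k w) ∈ A (J k w))
    (x : ℕ → H) (hx0 : ‖x 0 - xbar‖ ≤ δ)
    (hx : ∀ k, x (k + 1) = J k (x k)) :
    ∀ k : ℕ, Metric.infDist (x (k + 1)) Z ≤
      (1 / Real.sqrt (1 + (c k) ^ 2 / κ ^ 2)) * Metric.infDist (x k) Z := by
  -- the resolvent output element
  have hu : ∀ k, (1 / c k) • (x k - x (k + 1)) ∈ A (x (k + 1)) := by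
    intro k
    rw [hx k]
    exact hJ k (x k)
  -- key inequality: for z ∈ Z, ‖x_k - x_{k+1}‖² + ‖x_{k+1} - z‖² ≤ ‖x_k - z‖²
  have key : ∀ k, ∀ z ∈ Z, ‖x k - x (k + 1)‖ ^ 2 + ‖x (k + 1) - z‖ ^ 2 ≤ ‖x k - z‖ ^ 2 := by
    intro k z hz
    have hz0 : (0 : H) ∈ A z := by rw [hZ] at hz; exact hz
    have hmon := hmono (x (k + 1)) z ((1 / c k) • (x k - x (k + 1))) 0 (hu k) hz0
    rw [sub_zero, real_inner_smul_right] at hmon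
    have hcpos : 0 < 1 / c k := one_div_pos.mpr (hc k)
    have hinner : 0 ≤ ⟪x (k + 1) - z, x k - x (k + 1)⟫ := by
      nlinarith [hmon, hcpos]
    have expand : ‖x k - z‖ ^ 2 =
        ‖x k - x (k + 1)‖ ^ 2 + 2 * ⟪x k - x (k + 1), x (k + 1) - z⟫ + ‖x (k + 1) - z‖ ^ 2 := by
      have h1 : x k - z = (x k - x (k + 1)) + (x (k + 1) - z) := by abel
      rw [h1, @norm_add_sq_real]
    rw [expand, real_inner_comm]
    linarith
  -- Fejér monotonicity w.r.t. xbar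
  have fejer : ∀ k, ‖x (k + 1) - xbar‖ ≤ ‖x k - xbar‖ := by
    intro k
    have h := key k xbar hxbar
    nlinarith [norm_nonneg (x (k + 1) - xbar), norm_nonneg (x k - xbar),
      sq_nonneg ‖x k - x (k + 1)‖]
  have hball : ∀ k, ‖x k - xbar‖ ≤ δ := by
    intro k
    induction k with
    | zero => exact hx0
    | succ n ih => exact (fejer n).trans ih
  intro k
  set d := Metric.infDist (x (k + 1)) Z with hd
  set D := Metric.infDist (x k) Z with hD
  have hd0 : 0 ≤ d := Metric.infDist_nonneg
  have hck := hc k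
  -- subregularity bound : d ≤ (κ / c k) ‖x k - x (k+1)‖
  have hsubd : d ≤ κ * ((1 / c k) * ‖x k - x (k + 1)‖) := by
    have := hsub (x (k + 1)) (hball (k + 1)) _ (hu k)
    rwa [norm_smul, Real.norm_eq_abs, abs_of_pos (one_div_pos.mpr (hc k))] at this
  have hstep : (c k / κ) * d ≤ ‖x k - x (k + 1)‖ := by
    rw [div_mul_eq_mul_div, div_le_iff₀ hκ]
    calc c k * d ≤ c k * (κ * ((1 / c k) * ‖x k - x (k + 1)‖)) := by
          exact mul_le_mul_of_nonneg_left hsubd (le_of_lt hck)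
      _ = ‖x k - x (k + 1)‖ * κ := by field_simp
  -- the sqrt factor
  set s := Real.sqrt (1 + (c k) ^ 2 / κ ^ 2) with hs
  have harg : (0:ℝ) < 1 + (c k) ^ 2 / κ ^ 2 := by positivity
  have hspos : 0 < s := Real.sqrt_pos.mpr harg
  have hssq : s ^ 2 = 1 + (c k) ^ 2 / κ ^ 2 := Real.sq_sqrt harg.le
  -- for every z ∈ Z, s * d ≤ dist (x k) z
  have hmain : s * d ≤ D := by
    by_contra hlt
    push_neg at hlt
    obtain ⟨z, hz, hzd⟩ := (Metric.infDist_lt_iff hZne).mp hlt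
    rw [dist_eq_norm] at hzd
    have h1 := key k z hz
    have h2 : d ≤ ‖x (k + 1) - z‖ := by
      have := Metric.infDist_le_dist_of_mem (x := x (k+1)) hz
      rwa [dist_eq_norm] at this
    have h3 : (c k / κ) ^ 2 * d ^ 2 ≤ ‖x k - x (k + 1)‖ ^ 2 := by
      have h4 : 0 ≤ (c k / κ) * d := by positivity
      nlinarith [hstep]
    have h5 : s ^ 2 * d ^ 2 ≤ ‖x k - z‖ ^ 2 := by
      rw [hssq]
      have h6 : d ^ 2 ≤ ‖x (k + 1) - z‖ ^ 2 := by nlinarith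
      have : (c k / κ) ^ 2 = (c k) ^ 2 / κ ^ 2 := by rw [div_pow]
      nlinarith
    have h7 : 0 ≤ s * d := by positivity
    nlinarith [norm_nonneg (x k - z)]
  -- conclude
  rw [one_div, ← div_eq_inv_mul, le_div_iff₀ hspos]
  linarith [hmain, mul_comm s d]
end

section
/- Let H be a real Hilbert space and let A : H → Set H be maximally monotone. Suppose A⁻¹ is Lipschitz continuous at 0 with modulus α > 0: there is a point x̄ with {z ∈ H : 0 ∈ A z} = {x̄} and there exists τ > 0 such that ‖z − x̄‖ ≤ α·‖w‖ whenever w ∈ A z and ‖w‖ ≤ τ. Let (c_k)_{k∈ℕ} be positive reals, (λ_k)_{k∈ℕ} in (0,2), (η_k)_{k∈ℕ} and (ε_k)_{k∈ℕ} nonnegative reals, and (e_k)_{k∈ℕ} in H. For each k let J_k : H → H satisfy (1/c_k)·(w − J_k w) ∈ A(J_k w) for every w ∈ H (so J_k is the resolvent of c_k A). Let x_0 ∈ H and define x_{k+1} := (1−λ_k)x_k + λ_k·(J_k x_k) + η_k·e_k. Assume: (1/c_k)·(x_k − J_k x_k) → 0; η_k·ε_k → 0; ‖e_k‖ ≤ ε_k·‖x_k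 − x_{k+1}‖ for all k; liminf_{k→∞} c_k > 0; and 0 < liminf_{k→∞} λ_k ≤ limsup_{k→∞} λ_k < 2. Then there exist μ ∈ [0,1) and K ∈ ℕ such that for all k ≥ K, ‖x_{k+1} − x̄‖ ≤ μ·‖x_k − x̄‖, and hence ‖x_{k+1} − x̄‖ ≤ μ^{k−K+1}·‖x_K − x̄‖. -/
set_option maxHeartbeats 1000000


open scoped RealInnerProductSpace

/-- Q-linear convergence of the inexact generalized proximal point algorithm
under Lipschitz continuity of `A⁻¹` at `0` with modulus `α > 0` (witness `τ > 0`,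
`zer A = {x̄}`).  With resolvents `J_k` of `c_k A`, the iteration
`x_{k+1} = (1-λ_k)x_k + λ_k J_k x_k + η_k e_k`, assumptions
`(1/c_k)(x_k - J_k x_k) → 0`, `η_k ε_k → 0`, `‖e_k‖ ≤ ε_k‖x_k - x_{k+1}‖`,
`liminf c_k > 0`, and `0 < liminf λ_k ≤ limsup λ_k < 2`, there exist `μ ∈ [0,1)` and
`K` such that for all `k ≥ K`, `‖x_{k+1} - x̄‖ ≤ μ‖x_k - x̄‖` and hence
`‖x_{k+1} - x̄‖ ≤ μ^{k-K+1}‖x_K - x̄‖`. -/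
theorem stmt_18 {H : Type*} [NormedAddCommGroup H] [InnerProductSpace ℝ H] [CompleteSpace H]
    (A : H → Set H)
    (hmono : ∀ x y u v : H, u ∈ A x → v ∈ A y → 0 ≤ ⟪x - y, u - v⟫)
    (hmax : ∀ x u : H, (∀ y v : H, v ∈ A y → 0 ≤ ⟪x - y, u - v⟫) → u ∈ A x)
    (xbar : H) (hzer : {z : H | (0 : H) ∈ A z} = {xbar})
    (α τ : ℝ) (hα : 0 < α) (hτ : 0 < τ)
    (hLip : ∀ z w : H, w ∈ A z → ‖w‖ ≤ τ → ‖z - xbar‖ ≤ α * ‖w‖)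
    (c : ℕ → ℝ) (hc : ∀ k, 0 < c k)
    (lam : ℕ → ℝ) (hlam : ∀ k, lam k ∈ Set.Ioo (0 : ℝ) 2)
    (η ε : ℕ → ℝ) (hη : ∀ k, 0 ≤ η k) (hε : ∀ k, 0 ≤ ε k)
    (e : ℕ → H)
    (J : ℕ → H → H) (hJ : ∀ k, ∀ w : H, (1 / c k) • (w - J k w) ∈ A (J k w))
    (x : ℕ → H)
    (hx : ∀ k, x (k + 1) = (1 - lam k) • x k + lam k • J k (x k) + η k • e k)
    (hres : Filter.Tendsto (fun k => (1 / c k) • (x k - J k (x k)))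
      Filter.atTop (nhds (0 : H)))
    (hηε : Filter.Tendsto (fun k => η k * ε k) Filter.atTop (nhds 0))
    (he : ∀ k, ‖e k‖ ≤ ε k * ‖x k - x (k + 1)‖)
    (hcinf : ∃ c₀ > (0 : ℝ), ∀ᶠ k in Filter.atTop, c₀ ≤ c k)
    (hlaminf : 0 < Filter.liminf lam Filter.atTop)
    (hlamsup : Filter.limsup lam Filter.atTop < 2) :
    ∃ μ ∈ Set.Ico (0 : ℝ) 1, ∃ K : ℕ, ∀ k ≥ K,
      ‖x (k + 1) - xbar‖ ≤ μ * ‖x k - xbar‖ ∧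
      ‖x (k + 1) - xbar‖ ≤ μ ^ (k - K + 1) * ‖x K - xbar‖ := by
  classical
  -- xbar is a zero of A
  have h0 : (0 : H) ∈ A xbar := by
    have : xbar ∈ {z : H | (0 : H) ∈ A z} := by rw [hzer]; rfl
    exact this
  obtain ⟨c₀, hc₀, hcev⟩ := hcinf
  -- lower and upper eventual bounds on lam
  have hbdd₁ : Filter.IsBoundedUnder (· ≥ ·) Filter.atTop lam :=
    Filter.isBoundedUnder_of ⟨0, fun k => (hlam k).1.le⟩
  have hbdd₂ : Filter.IsBoundedUnder (· ≤ ·) Filter.atTop lam :=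
    Filter.isBoundedUnder_of ⟨2, fun k => (hlam k).2.le⟩
  set a : ℝ := min (Filter.liminf lam Filter.atTop / 2) 1 with ha_def
  set b : ℝ := max ((Filter.limsup lam Filter.atTop + 2) / 2) 1 with hb_def
  have ha0 : 0 < a := lt_min (by linarith) one_pos
  have ha1 : a ≤ 1 := min_le_right _ _
  have hb1 : 1 ≤ b := le_max_right _ _
  have hb2 : b < 2 := max_lt (by linarith) one_lt_two
  have hev1 : ∀ᶠ k in Filter.atTop, a < lam k := by
    have := Filter.eventually_lt_of_lt_liminf
      (show Filter.liminf lam Filter.atTop / 2 < Filter.liminf lam Filter.atTop by linarith) hbdd₁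
    exact this.mono fun k hk => lt_of_le_of_lt (min_le_left _ _) hk
  have hev2 : ∀ᶠ k in Filter.atTop, lam k < b := by
    have := Filter.eventually_lt_of_limsup_lt
      (show Filter.limsup lam Filter.atTop < (Filter.limsup lam Filter.atTop + 2) / 2 by linarith)
      hbdd₂
    exact this.mono fun k hk => lt_of_lt_of_le hk (le_max_left _ _)
  -- constants
  set δ : ℝ := min (a * (2 - a)) (b * (2 - b)) with hδ_def
  have hδ0 : 0 < δ := lt_min (mul_pos ha0 (by linarith)) (mul_pos (by linarith) (by linarith))
  have hδ1 : δ ≤ 1 := le_trans (min_le_left _ _) (by nlinarith)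
  set r : ℝ := α / c₀ with hr_def
  have hr0 : 0 < r := div_pos hα hc₀
  set q : ℝ := δ / (1 + r) ^ 2 with hq_def
  have hq0 : 0 < q := div_pos hδ0 (by positivity)
  have hq1 : q ≤ 1 := by
    rw [hq_def, div_le_one (by positivity)]; nlinarith
  set μ₁ : ℝ := Real.sqrt (1 - q) with hμ₁_def
  have hμ₁0 : 0 ≤ μ₁ := Real.sqrt_nonneg _
  have hμ₁sq : μ₁ ^ 2 = 1 - q := Real.sq_sqrt (by linarith)
  have hμ₁lt : μ₁ < 1 := by nlinarith
  set β : ℝ := (1 - μ₁) / 3 with hβ_def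
  have hβ0 : 0 < β := by rw [hβ_def]; linarith
  have hβ1 : β < 1 := by rw [hβ_def]; linarith
  set μ : ℝ := (μ₁ + β) / (1 - β) with hμ_def
  have hμ0 : 0 ≤ μ := div_nonneg (by linarith) (by linarith)
  have hμlt : μ < 1 := by
    rw [hμ_def, div_lt_one (by linarith), hβ_def]; linarith
  have hδa : δ ≤ a * (2 - a) := min_le_left _ _
  have hδb : δ ≤ b * (2 - b) := min_le_right _ _
  clear_value a b δ r q μ₁ β μ
  clear ha_def hb_def hδ_def hμ₁_def
  -- eventual smallness of the residual and the error factor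
  have hev4 : ∀ᶠ k in Filter.atTop, ‖(1 / c k) • (x k - J k (x k))‖ ≤ τ := by
    have h := hres.norm
    simp only [norm_zero] at h
    exact (h.eventually_lt_const hτ).mono fun k hk => hk.le
  have hev5 : ∀ᶠ k in Filter.atTop, η k * ε k < β := hηε.eventually_lt_const hβ0
  obtain ⟨K, hK⟩ := Filter.eventually_atTop.mp
    ((((hev1.and hev2).and hcev).and hev4).and hev5)
  refine ⟨μ, ⟨hμ0, hμlt⟩, K, ?_⟩
  -- the one-step contraction
  have claim : ∀ k ≥ K, ‖x (k + 1) - xbar‖ ≤ μ * ‖x k - xbar‖ := by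
    intro k hk
    obtain ⟨⟨⟨⟨hka, hkb⟩, hkc⟩, hkτ⟩, hkβ⟩ := hK k hk
    set y : H := J k (x k) with hy_def
    have hw : (1 / c k) • (x k - y) ∈ A y := hJ k (x k)
    have hck : 0 < c k := hc k
    -- inner product nonnegativity
    have hip : 0 ≤ ⟪y - xbar, x k - y⟫ := by
      have h1 := hmono y xbar ((1 / c k) • (x k - y)) 0 hw h0
      rw [sub_zero, real_inner_smul_right] at h1
      by_contra hcon
      push_neg at hcon
      nlinarith [mul_pos (one_div_pos.mpr hck) (neg_pos.mpr hcon)]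
    -- Lipschitz bound
    have hyb : ‖y - xbar‖ ≤ (α / c k) * ‖x k - y‖ := by
      have h1 := hLip y ((1 / c k) • (x k - y)) hw hkτ
      rw [norm_smul, Real.norm_eq_abs, abs_of_pos (one_div_pos.mpr hck)] at h1
      calc ‖y - xbar‖ ≤ α * (1 / c k * ‖x k - y‖) := h1
        _ = (α / c k) * ‖x k - y‖ := by ring
    have hrk : α / c k ≤ r := by
      rw [hr_def]
      exact div_le_div_of_nonneg_left hα.le hc₀ hkc
    have hyb' : ‖y - xbar‖ ≤ r * ‖x k - y‖ :=
      hyb.trans (mul_le_mul_of_nonneg_right hrk (norm_nonneg _))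
    -- ‖x k - xbar‖ ≤ (1+r) ‖x k - y‖
    have hxb : ‖x k - xbar‖ ≤ (1 + r) * ‖x k - y‖ := by
      have h1 : x k - xbar = (x k - y) + (y - xbar) := by abel
      calc ‖x k - xbar‖ ≤ ‖x k - y‖ + ‖y - xbar‖ := by rw [h1]; exact norm_add_le _ _
        _ ≤ ‖x k - y‖ + r * ‖x k - y‖ := by linarith
        _ = (1 + r) * ‖x k - y‖ := by ring
    -- squared inequality for the exact relaxed step
    have hexp : ‖(x k - xbar) - lam k • (x k - y)‖ ^ 2
        = ‖x k - xbar‖ ^ 2 - 2 * (lam k * ⟪x k - xbar, x k - y⟫)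
          + lam k ^ 2 * ‖x k - y‖ ^ 2 := by
      rw [norm_sub_sq_real, real_inner_smul_right, norm_smul, Real.norm_eq_abs,
        mul_pow, sq_abs]
    have hipx : ⟪x k - xbar, x k - y⟫ = ‖x k - y‖ ^ 2 + ⟪y - xbar, x k - y⟫ := by
      have h1 : x k - xbar = (x k - y) + (y - xbar) := by abel
      rw [h1, inner_add_left, real_inner_self_eq_norm_sq]
    have hδk : δ ≤ lam k * (2 - lam k) := by
      rcases le_or_gt (lam k) 1 with h | h
      · calc δ ≤ a * (2 - a) := hδa
          _ ≤ lam k * (2 - lam k) := by nlinarith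
      · calc δ ≤ b * (2 - b) := hδb
          _ ≤ lam k * (2 - lam k) := by nlinarith
    have hsq : ‖(x k - xbar) - lam k • (x k - y)‖ ^ 2
        ≤ (1 - q) * ‖x k - xbar‖ ^ 2 := by
      have h2 : ‖x k - xbar‖ ^ 2 ≤ (1 + r) ^ 2 * ‖x k - y‖ ^ 2 := by
        nlinarith [norm_nonneg (x k - xbar), norm_nonneg (x k - y)]
      have h3 : ‖(x k - xbar) - lam k • (x k - y)‖ ^ 2
          ≤ ‖x k - xbar‖ ^ 2 - δ * ‖x k - y‖ ^ 2 := by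
        rw [hexp, hipx]
        nlinarith [(hlam k).1, (hlam k).2, norm_nonneg (x k - y),
          mul_nonneg (hlam k).1.le hip]
      have h4 : q * ‖x k - xbar‖ ^ 2 ≤ δ * ‖x k - y‖ ^ 2 := by
        have h5 : δ * ‖x k - xbar‖ ^ 2 ≤ δ * ((1 + r) ^ 2 * ‖x k - y‖ ^ 2) :=
          mul_le_mul_of_nonneg_left h2 hδ0.le
        rw [hq_def, div_mul_eq_mul_div, div_le_iff₀ (by positivity)]
        calc δ * ‖x k - xbar‖ ^ 2 ≤ δ * ((1 + r) ^ 2 * ‖x k - y‖ ^ 2) := h5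
          _ = δ * ‖x k - y‖ ^ 2 * (1 + r) ^ 2 := by ring
      linarith
    have hstep : ‖(x k - xbar) - lam k • (x k - y)‖ ≤ μ₁ * ‖x k - xbar‖ := by
      have h1 : ‖(x k - xbar) - lam k • (x k - y)‖ ^ 2 ≤ (μ₁ * ‖x k - xbar‖) ^ 2 := by
        rw [mul_pow, hμ₁sq]; exact hsq
      have h2 := Real.sqrt_le_sqrt h1
      rwa [Real.sqrt_sq (norm_nonneg _), Real.sqrt_sq (by positivity)] at h2
    -- decomposition of the inexact step
    have hdecomp : x (k + 1) - xbar = ((x k - xbar) - lam k • (x k - y)) + η k • e k := by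
      rw [hx k]; module
    have herr : ‖η k • e k‖ ≤ β * (‖x k - xbar‖ + ‖x (k + 1) - xbar‖) := by
      have h1 : ‖η k • e k‖ = η k * ‖e k‖ := by
        rw [norm_smul, Real.norm_eq_abs, abs_of_nonneg (hη k)]
      have h2 : ‖x k - x (k + 1)‖ ≤ ‖x k - xbar‖ + ‖x (k + 1) - xbar‖ := by
        have : x k - x (k + 1) = (x k - xbar) - (x (k + 1) - xbar) := by abel
        rw [this]; exact norm_sub_le _ _
      have h3 : η k * ‖e k‖ ≤ (η k * ε k) * ‖x k - x (k + 1)‖ := by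
        calc η k * ‖e k‖ ≤ η k * (ε k * ‖x k - x (k + 1)‖) :=
              mul_le_mul_of_nonneg_left (he k) (hη k)
          _ = (η k * ε k) * ‖x k - x (k + 1)‖ := by ring
      have h4 : (η k * ε k) * ‖x k - x (k + 1)‖ ≤ β * ‖x k - x (k + 1)‖ :=
        mul_le_mul_of_nonneg_right hkβ.le (norm_nonneg _)
      have h5 : β * ‖x k - x (k + 1)‖ ≤ β * (‖x k - xbar‖ + ‖x (k + 1) - xbar‖) :=
        mul_le_mul_of_nonneg_left h2 hβ0.le
      rw [h1]; linarith
    have hmain : ‖x (k + 1) - xbar‖ ≤ μ₁ * ‖x k - xbar‖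
        + β * (‖x k - xbar‖ + ‖x (k + 1) - xbar‖) := by
      calc ‖x (k + 1) - xbar‖
          ≤ ‖(x k - xbar) - lam k • (x k - y)‖ + ‖η k • e k‖ := by
            rw [hdecomp]; exact norm_add_le _ _
        _ ≤ μ₁ * ‖x k - xbar‖ + β * (‖x k - xbar‖ + ‖x (k + 1) - xbar‖) := by
            linarith
    rw [hμ_def]
    have h6 : (1 - β) * ‖x (k + 1) - xbar‖ ≤ (μ₁ + β) * ‖x k - xbar‖ := by linarith
    rw [div_mul_eq_mul_div, le_div_iff₀ (by linarith)]
    linarith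
  intro k hk
  refine ⟨claim k hk, ?_⟩
  induction k, hk using Nat.le_induction with
  | base => simpa [Nat.sub_self] using claim K le_rfl
  | succ n hn ih =>
      have h1 : ‖x (n + 1 + 1) - xbar‖ ≤ μ * ‖x (n + 1) - xbar‖ := claim (n + 1) (by omega)
      have h2 : ‖x (n + 1) - xbar‖ ≤ μ ^ (n - K + 1) * ‖x K - xbar‖ := ih
      have h3 : n + 1 - K + 1 = (n - K + 1) + 1 := by omega
      calc ‖x (n + 1 + 1) - xbar‖ ≤ μ * ‖x (n + 1) - xbar‖ := h1
        _ ≤ μ * (μ ^ (n - K + 1) * ‖x K - xbar‖) := mul_le_mul_of_nonneg_left h2 hμ0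
        _ = μ ^ (n + 1 - K + 1) * ‖x K - xbar‖ := by rw [h3, pow_succ]; ring
end

section
/- Let H be a real Hilbert space and let A : H → Set H be maximally monotone with Z := {z ∈ H : 0 ∈ A z} nonempty. Let x̄ ∈ Z and assume the metric subregularity condition: there exist κ > 0 and δ > 0 such that for every w with ‖w − x̄‖ ≤ δ and every u ∈ A w, infDist(w, Z) ≤ κ·‖u‖. Let (c_k)_{k∈ℕ} be positive reals with c := inf_k c_k > 0, and for each k let J_k : H → H satisfy (1/c_k)·(w − J_k w) ∈ A(J_k w) for every w ∈ H (so J_k is the resolvent of c_k A). Let (λ_k)_{k∈ℕ} satisfy 0 < inf_k λ_k and sup_k λ_k < 2, let x_0 ∈ H with ‖x_0 − x̄‖ ≤ δ, and define the exact generalized proximal point iteration x_{k+1} := (1−λ_k)x_k + λ_k·(J_k x_k). Set ρ := sup_k (1 − λ_k(2−λ_k)/(1 + κ/c_k)²). Then ρ < 1 and there exists x̂ ∈ Z such that ‖x_k − x̂‖ ≤ 2·ρ^{k/2}·infDist(x_0, Z) for all k ∈ ℕ; in particular (x_k) converges R-linearly to a zero of A. -/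
/-!
Firm nonexpansiveness of the resolvent makes the relaxed iteration Fejér monotone with respect
to `Z`, with a decrease of `‖x_{k+1} - z‖²` by `λ_k(2-λ_k)‖x_k - J_k x_k‖²`. Subregularity,
applied at `J_k x_k` (which stays in the ball around `x̄`), bounds `d(x_k, Z)` by
`(1 + κ/c_k)‖x_k - J_k x_k‖`, so `d(x_k, Z)²` contracts by the factor `ρ`. A Fejér monotone
sequence whose distance to a closed set decays geometrically converges to a point `x̂` of the
set with `‖x_k - x̂‖ ≤ 2 d(x_k, Z)`.
-/

open scoped RealInnerProductSpace
open Metric Filter Topology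

section MetricSpace

variable {α : Type*} [MetricSpace α]

theorem dist_le_two_mul_infDist {Z : Set α} (hZ : Z.Nonempty) {x y : α}
    (h : ∀ z ∈ Z, dist y z ≤ dist x z) : dist x y ≤ 2 * infDist x Z := by
  have : dist x y / 2 ≤ infDist x Z := (le_infDist hZ).2 fun z hz => by
    linarith [dist_triangle_right x y z, h z hz]
  linarith

theorem sq_infDist_add_le_of_forall {Z : Set α} (hZ : Z.Nonempty) {a b : α} {s : ℝ}
    (h : ∀ z ∈ Z, dist a z ^ 2 + s ≤ dist b z ^ 2) :
    infDist a Z ^ 2 + s ≤ infDist b Z ^ 2 := by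
  have hle : √(infDist a Z ^ 2 + s) ≤ infDist b Z := (le_infDist hZ).2 fun z hz => by
    refine Real.sqrt_le_iff.2 ⟨dist_nonneg, le_trans ?_ (h z hz)⟩
    gcongr
    exacts [infDist_nonneg, infDist_le_dist_of_mem hz]
  exact (Real.sqrt_le_iff.1 hle).2

theorem sq_infDist_le_of_forall {Z : Set α} (hZ : Z.Nonempty) {a b : α} {s e m : ℝ}
    (hm : 0 < m) (hs : 0 ≤ s) (h : ∀ z ∈ Z, dist a z ^ 2 + s * e ^ 2 ≤ dist b z ^ 2)
    (hb : infDist b Z ≤ m * e) :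
    infDist a Z ^ 2 ≤ (1 - s / m ^ 2) * infDist b Z ^ 2 := by
  have hsq : infDist b Z ^ 2 ≤ m ^ 2 * e ^ 2 := by
    rw [← mul_pow]; gcongr; exact infDist_nonneg
  have : s / m ^ 2 * infDist b Z ^ 2 ≤ s * e ^ 2 := by
    calc s / m ^ 2 * infDist b Z ^ 2 ≤ s / m ^ 2 * (m ^ 2 * e ^ 2) := by gcongr
      _ = s * e ^ 2 := by field_simp
  linarith [sq_infDist_add_le_of_forall hZ h]

def FejerMonotone (x : ℕ → α) (Z : Set α) : Prop :=
  ∀ k, ∀ z ∈ Z, dist (x (k + 1)) z ≤ dist (x k) z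

namespace FejerMonotone

variable {x : ℕ → α} {Z : Set α}

theorem dist_le_of_le (hx : FejerMonotone x Z) {z : α} (hz : z ∈ Z) {k m : ℕ} (hkm : k ≤ m) :
    dist (x m) z ≤ dist (x k) z := by
  induction m, hkm using Nat.le_induction with
  | base => exact le_rfl
  | succ n _ ih => exact (hx n z hz).trans ih

theorem dist_le_of_tendsto (hx : FejerMonotone x Z) {xhat z : α}
    (hlim : Tendsto x atTop (𝓝 xhat)) (hz : z ∈ Z) (k : ℕ) : dist xhat z ≤ dist (x k) z :=
  le_of_tendsto (hlim.dist tendsto_const_nhds)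
    (eventually_atTop.2 ⟨k, fun _ hm => hx.dist_le_of_le hz hm⟩)

theorem exists_tendsto_of_infDist_le_geometric [CompleteSpace α] (hx : FejerMonotone x Z)
    (hZ : IsClosed Z) (hZne : Z.Nonempty) {C r : ℝ} (hr0 : 0 ≤ r) (hr1 : r < 1)
    (hd : ∀ k, infDist (x k) Z ≤ r ^ k * C) :
    ∃ xhat ∈ Z, Tendsto x atTop (𝓝 xhat) ∧ ∀ k, dist (x k) xhat ≤ 2 * infDist (x k) Z := by
  have hstep (k : ℕ) : dist (x k) (x (k + 1)) ≤ 2 * C * r ^ k := by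
    rw [mul_assoc, mul_comm C]
    exact (dist_le_two_mul_infDist hZne (hx k)).trans (by gcongr; exact hd k)
  obtain ⟨xhat, hlim⟩ := cauchySeq_tendsto_of_complete (cauchySeq_of_le_geometric _ _ hr1 hstep)
  have hd0 : Tendsto (fun k => infDist (x k) Z) atTop (𝓝 0) := by
    refine squeeze_zero (fun _ => infDist_nonneg) hd ?_
    simpa using (tendsto_pow_atTop_nhds_zero_of_lt_one hr0 hr1).mul_const C
  have hxhat : infDist xhat Z = 0 :=
    tendsto_nhds_unique (((continuous_infDist_pt Z).tendsto xhat).comp hlim) hd0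
  exact ⟨xhat, (hZ.mem_iff_infDist_zero hZne).2 hxhat, hlim,
    fun k => dist_le_two_mul_infDist hZne fun z hz => hx.dist_le_of_tendsto hlim hz k⟩

end FejerMonotone

end MetricSpace

theorem le_sqrt_pow_mul_of_sq_le {D : ℕ → ℝ} {ρ : ℝ} (hD : ∀ k, 0 ≤ D k)
    (h : ∀ k, D (k + 1) ^ 2 ≤ ρ * D k ^ 2) (k : ℕ) : D k ≤ √ρ ^ k * D 0 := by
  induction k with
  | zero => simp
  | succ k ih =>
    calc D (k + 1) = √(D (k + 1) ^ 2) := (Real.sqrt_sq (hD _)).symm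
      _ ≤ √(ρ * D k ^ 2) := Real.sqrt_le_sqrt (h k)
      _ = √ρ * D k := by rw [Real.sqrt_mul' _ (sq_nonneg _), Real.sqrt_sq (hD k)]
      _ ≤ √ρ * (√ρ ^ k * D 0) := by gcongr
      _ = √ρ ^ (k + 1) * D 0 := by ring

section InnerProductSpace

variable {H : Type*} [NormedAddCommGroup H] [InnerProductSpace ℝ H]

theorem norm_sub_le_of_inner_nonneg {x y z : H} (h : 0 ≤ ⟪y - z, x - y⟫) :
    ‖y - z‖ ≤ ‖x - z‖ := by
  have hsplit : x - z = (y - z) + (x - y) := by abel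
  have : ‖y - z‖ ^ 2 ≤ ‖x - z‖ ^ 2 := by
    rw [hsplit, norm_add_sq_real]
    nlinarith [sq_nonneg ‖x - y‖]
  exact (pow_le_pow_iff_left₀ (norm_nonneg _) (norm_nonneg _) two_ne_zero).1 this

theorem norm_relaxed_sub_sq_add_le {x y z : H} {l : ℝ} (hl : 0 ≤ l) (h : 0 ≤ ⟪y - z, x - y⟫) :
    ‖(1 - l) • x + l • y - z‖ ^ 2 + l * (2 - l) * ‖x - y‖ ^ 2 ≤ ‖x - z‖ ^ 2 := by
  have hstep : (1 - l) • x + l • y - z = (x - z) - l • (x - y) := by module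
  have hsplit : x - z = (x - y) + (y - z) := by abel
  have hinner : ⟪x - z, x - y⟫ = ‖x - y‖ ^ 2 + ⟪y - z, x - y⟫ := by
    rw [hsplit, inner_add_left, real_inner_self_eq_norm_sq]
  rw [hstep, norm_sub_sq_real, real_inner_smul_right, norm_smul, Real.norm_of_nonneg hl, hinner]
  nlinarith

variable {A : H → Set H}

theorem inner_resolvent_sub_nonneg
    (hmono : ∀ x y u v : H, u ∈ A x → v ∈ A y → 0 ≤ ⟪x - y, u - v⟫)
    {c : ℝ} (hc : 0 < c) {w y z : H} (hy : (1 / c) • (w - y) ∈ A y) (hz : (0 : H) ∈ A z) :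
    0 ≤ ⟪y - z, w - y⟫ := by
  have := hmono y z _ 0 hy hz
  rw [sub_zero, real_inner_smul_right] at this
  exact nonneg_of_mul_nonneg_right this (one_div_pos.2 hc)

theorem isClosed_setOf_zero_mem
    (hmono : ∀ x y u v : H, u ∈ A x → v ∈ A y → 0 ≤ ⟪x - y, u - v⟫)
    (hmax : ∀ x u : H, (∀ y v : H, v ∈ A y → 0 ≤ ⟪x - y, u - v⟫) → u ∈ A x) :
    IsClosed {z : H | (0 : H) ∈ A z} := by
  have : {z : H | (0 : H) ∈ A z} = ⋂ y, ⋂ v ∈ A y, {z | 0 ≤ ⟪z - y, 0 - v⟫} := by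
    ext z
    simp only [Set.mem_iInter]
    exact ⟨fun hz y v hv => hmono _ _ _ _ hz hv, hmax z 0⟩
  rw [this]
  exact isClosed_iInter fun y => isClosed_biInter fun v _ =>
    isClosed_le continuous_const (by fun_prop)

theorem infDist_le_of_resolvent {Z : Set H} {κ c : ℝ} (hc : 0 < c) {w y : H}
    (hy : infDist y Z ≤ κ * ‖(1 / c) • (w - y)‖) :
    infDist w Z ≤ (1 + κ / c) * ‖w - y‖ := by
  rw [norm_smul, Real.norm_of_nonneg (one_div_pos.2 hc).le] at hy
  calc infDist w Z ≤ infDist y Z + ‖w - y‖ := dist_eq_norm w y ▸ infDist_le_infDist_add_dist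
    _ ≤ κ * (1 / c * ‖w - y‖) + ‖w - y‖ := by gcongr
    _ = (1 + κ / c) * ‖w - y‖ := by ring

end InnerProductSpace

theorem ciInf_le_of_pos {ι : Type*} {f : ι → ℝ} (h : 0 < ⨅ i, f i) (i : ι) :
    ⨅ i, f i ≤ f i := by
  refine ciInf_le ?_ i
  by_contra hf
  rw [Real.iInf_of_not_bddBelow hf] at h
  exact h.false

/-- The contraction factor of `d(·, Z)²` in one step with stepsize `c` and relaxation `l`. -/
noncomputable def relaxationRate (κ c l : ℝ) : ℝ := 1 - l * (2 - l) / (1 + κ / c) ^ 2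

theorem relaxationRate_nonneg {κ c : ℝ} (hκ : 0 ≤ κ) (hc : 0 < c) (l : ℝ) :
    0 ≤ relaxationRate κ c l := by
  have hm : 1 ≤ 1 + κ / c := le_add_of_nonneg_right (div_nonneg hκ hc.le)
  have : l * (2 - l) / (1 + κ / c) ^ 2 ≤ 1 := by
    rw [div_le_one (by positivity)]
    nlinarith [sq_nonneg (l - 1)]
  unfold relaxationRate
  linarith

theorem iSup_relaxationRate_lt_one {κ b : ℝ} {c lam : ℕ → ℝ} (hκ : 0 ≤ κ)
    (hcinf : 0 < ⨅ k, c k) (hlaminf : 0 < ⨅ k, lam k) (hb : b < 2) (hlam : ∀ k, lam k ≤ b) :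
    BddAbove (Set.range fun k => relaxationRate κ (c k) (lam k)) ∧
      ⨆ k, relaxationRate κ (c k) (lam k) < 1 := by
  set q := (⨅ k, lam k) * (2 - b) / (1 + κ / ⨅ k, c k) ^ 2
  have hq : 0 < q := div_pos (mul_pos hlaminf (by linarith)) (by positivity)
  have hle (k : ℕ) : relaxationRate κ (c k) (lam k) ≤ 1 - q := by
    have hlamk := ciInf_le_of_pos hlaminf k
    have hck := ciInf_le_of_pos hcinf k
    have hnum : (⨅ k, lam k) * (2 - b) ≤ lam k * (2 - lam k) :=
      mul_le_mul hlamk (by linarith [hlam k]) (by linarith) (by linarith)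
    have hden_pos : 0 < 1 + κ / c k :=
      add_pos_of_pos_of_nonneg one_pos (div_nonneg hκ (hcinf.trans_le hck).le)
    have hden : 1 + κ / c k ≤ 1 + κ / ⨅ k, c k := by gcongr
    have : q ≤ lam k * (2 - lam k) / (1 + κ / c k) ^ 2 :=
      div_le_div₀ ((mul_pos hlaminf (by linarith)).le.trans hnum) hnum (pow_pos hden_pos 2)
        (pow_le_pow_left₀ hden_pos.le hden 2)
    unfold relaxationRate
    linarith
  exact ⟨⟨1 - q, Set.forall_mem_range.2 hle⟩, (ciSup_le hle).trans_lt (by linarith)⟩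

theorem stmt_19_general {H : Type*} [NormedAddCommGroup H] [InnerProductSpace ℝ H] [CompleteSpace H]
    (A : H → Set H)
    (hmono : ∀ x y u v : H, u ∈ A x → v ∈ A y → 0 ≤ ⟪x - y, u - v⟫)
    (hmax : ∀ x u : H, (∀ y v : H, v ∈ A y → 0 ≤ ⟪x - y, u - v⟫) → u ∈ A x)
    (Z : Set H) (hZ : Z = {z : H | (0 : H) ∈ A z})
    (xbar : H) (hxbar : xbar ∈ Z)
    (κ δ : ℝ) (hκ : 0 < κ)
    (hsub : ∀ w : H, ‖w - xbar‖ ≤ δ → ∀ u ∈ A w, Metric.infDist w Z ≤ κ * ‖u‖)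
    (c : ℕ → ℝ) (hcinf : 0 < ⨅ k, c k)
    (J : ℕ → H → H) (hJ : ∀ k, ∀ w : H, (1 / c k) • (w - J k w) ∈ A (J k w))
    (lam : ℕ → ℝ)
    (hlaminf : 0 < ⨅ k, lam k)
    (hlamsup : ∃ b : ℝ, b < 2 ∧ ∀ k, lam k ≤ b)
    (x : ℕ → H) (hx0 : ‖x 0 - xbar‖ ≤ δ)
    (hx : ∀ k, x (k + 1) = (1 - lam k) • x k + lam k • J k (x k))
    (ρ : ℝ) (hρ : ρ = ⨆ k, (1 - lam k * (2 - lam k) / (1 + κ / c k) ^ 2)) :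
    ρ < 1 ∧ ∃ xhat ∈ Z,
      (∀ k : ℕ, ‖x k - xhat‖ ≤ 2 * ρ ^ ((k : ℝ) / 2) * Metric.infDist (x 0) Z) ∧
      Filter.Tendsto x Filter.atTop (nhds xhat) := by
  obtain ⟨b, hb2, hb⟩ := hlamsup
  have hc (k : ℕ) : 0 < c k := hcinf.trans_le (ciInf_le_of_pos hcinf k)
  have hlam (k : ℕ) : 0 ≤ lam k := (hlaminf.trans_le (ciInf_le_of_pos hlaminf k)).le
  have hs (k : ℕ) : 0 ≤ lam k * (2 - lam k) := mul_nonneg (hlam k) (by linarith [hb k])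
  have hρ' : ρ = ⨆ k, relaxationRate κ (c k) (lam k) := hρ
  obtain ⟨hbdd, hρ1⟩ := hρ' ▸ iSup_relaxationRate_lt_one hκ.le hcinf hlaminf hb2 hb
  have hρk (k : ℕ) : relaxationRate κ (c k) (lam k) ≤ ρ := hρ' ▸ le_ciSup hbdd k
  have hρ0 : 0 ≤ ρ := (relaxationRate_nonneg hκ.le (hc 0) _).trans (hρk 0)
  have hfirm (k : ℕ) {z : H} (hz : z ∈ Z) : 0 ≤ ⟪J k (x k) - z, x k - J k (x k)⟫ :=
    inner_resolvent_sub_nonneg hmono (hc k) (hJ k _) (by rwa [hZ] at hz)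
  have hfejer (k : ℕ) (z : H) (hz : z ∈ Z) :
      dist (x (k + 1)) z ^ 2 + lam k * (2 - lam k) * ‖x k - J k (x k)‖ ^ 2 ≤ dist (x k) z ^ 2 := by
    simpa only [dist_eq_norm, hx k] using norm_relaxed_sub_sq_add_le (hlam k) (hfirm k hz)
  have hfm : FejerMonotone x Z := fun k z hz =>
    (pow_le_pow_iff_left₀ dist_nonneg dist_nonneg two_ne_zero).1 <|
      (le_add_of_nonneg_right (mul_nonneg (hs k) (sq_nonneg _))).trans (hfejer k z hz)
  have hball (k : ℕ) : ‖x k - xbar‖ ≤ δ := by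
    simpa only [dist_eq_norm] using
      (hfm.dist_le_of_le hxbar k.zero_le).trans ((dist_eq_norm _ _).trans_le hx0)
  have hdist (k : ℕ) : infDist (x k) Z ≤ (1 + κ / c k) * ‖x k - J k (x k)‖ :=
    infDist_le_of_resolvent (hc k) <| hsub _
      ((norm_sub_le_of_inner_nonneg (hfirm k hxbar)).trans (hball k)) _ (hJ k _)
  have hcontr (k : ℕ) : infDist (x (k + 1)) Z ^ 2 ≤ ρ * infDist (x k) Z ^ 2 :=
    (sq_infDist_le_of_forall ⟨xbar, hxbar⟩ (by linarith [div_nonneg hκ.le (hc k).le]) (hs k)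
      (hfejer k) (hdist k)).trans (mul_le_mul_of_nonneg_right (hρk k) (sq_nonneg _))
  have hgeom := le_sqrt_pow_mul_of_sq_le (fun _ => infDist_nonneg) hcontr
  obtain ⟨xhat, hxhat, hlim, hbound⟩ := hfm.exists_tendsto_of_infDist_le_geometric
    (hZ ▸ isClosed_setOf_zero_mem hmono hmax) ⟨xbar, hxbar⟩ (Real.sqrt_nonneg ρ)
    ((Real.sqrt_lt' one_pos).2 (by rwa [one_pow])) hgeom
  refine ⟨hρ1, xhat, hxhat, fun k => ?_, hlim⟩
  rw [← dist_eq_norm, Real.rpow_div_two_eq_sqrt _ hρ0, Real.rpow_natCast, mul_assoc]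
  exact (hbound k).trans (by gcongr; exact hgeom k)

/-- R-linear convergence of the exact generalized proximal point algorithm:
`A` maximally monotone with `Z := zer A` nonempty, metric subregularity at `x̄ ∈ Z` with
constants `κ > 0`, `δ > 0`, resolvents `J_k` of `c_k A` with `inf_k c_k > 0`,
relaxation parameters with `0 < inf_k λ_k` and `sup_k λ_k < 2`, `‖x_0 - x̄‖ ≤ δ`, and
`x_{k+1} = (1-λ_k)x_k + λ_k J_k x_k`.  With
`ρ := sup_k (1 - λ_k(2-λ_k)/(1 + κ/c_k)²)` one has `ρ < 1` and there exists `x̂ ∈ Z`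
with `‖x_k - x̂‖ ≤ 2ρ^{k/2}·d(x_0, Z)` for all `k`; in particular `x_k → x̂ ∈ Z`
(R-linearly). -/
theorem stmt_19 {H : Type*} [NormedAddCommGroup H] [InnerProductSpace ℝ H] [CompleteSpace H]
    (A : H → Set H)
    (hmono : ∀ x y u v : H, u ∈ A x → v ∈ A y → 0 ≤ ⟪x - y, u - v⟫)
    (hmax : ∀ x u : H, (∀ y v : H, v ∈ A y → 0 ≤ ⟪x - y, u - v⟫) → u ∈ A x)
    (Z : Set H) (hZ : Z = {z : H | (0 : H) ∈ A z}) (hZne : Z.Nonempty)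
    (xbar : H) (hxbar : xbar ∈ Z)
    (κ δ : ℝ) (hκ : 0 < κ) (hδ : 0 < δ)
    (hsub : ∀ w : H, ‖w - xbar‖ ≤ δ → ∀ u ∈ A w, Metric.infDist w Z ≤ κ * ‖u‖)
    (c : ℕ → ℝ) (hc : ∀ k, 0 < c k) (hcinf : 0 < ⨅ k, c k)
    (J : ℕ → H → H) (hJ : ∀ k, ∀ w : H, (1 / c k) • (w - J k w) ∈ A (J k w))
    (lam : ℕ → ℝ)
    (hlaminf : 0 < ⨅ k, lam k)
    (hlamsup : ∃ b : ℝ, b < 2 ∧ ∀ k, lam k ≤ b)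
    (x : ℕ → H) (hx0 : ‖x 0 - xbar‖ ≤ δ)
    (hx : ∀ k, x (k + 1) = (1 - lam k) • x k + lam k • J k (x k))
    (ρ : ℝ) (hρ : ρ = ⨆ k, (1 - lam k * (2 - lam k) / (1 + κ / c k) ^ 2)) :
    ρ < 1 ∧ ∃ xhat ∈ Z,
      (∀ k : ℕ, ‖x k - xhat‖ ≤ 2 * ρ ^ ((k : ℝ) / 2) * Metric.infDist (x 0) Z) ∧
      Filter.Tendsto x Filter.atTop (nhds xhat) :=
  stmt_19_general A hmono hmax Z hZ xbar hxbar κ δ hκ hsub c hcinf J hJ lam hlaminf hlamsup x hx0 hx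
    ρ hρ
end
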